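/- arXiv:2012.14992 — 6 statements merged into one kernel-verified Lean document; each statement's English description precedes it below -/
import Mathlib

section
/- Let G be a (simple, undirected) graph and let F_1, …, F_n be matchings in G, each of size n. Then there exists a rainbow matching of size at least (2/3)n − 4/3; that is, there exist indices i_1 < i_2 < … < i_k with k ≥ (2/3)n − 4/3 and edges e_{i_j} ∈ F_{i_j} that are pairwise disjoint. -/
/-!
Fix a maximum rainbow matching with colour set `I`, `k = #I`, and vertex set `W`, so `#W ≤ 2k`.
By maximality every edge of a free colour `x ∉ I` meets `W`; hence `x` has at least `2n - 2k`
pendant vertices (vertices of `W` at which an edge of `F x` leaves `W`), and at least `2n - 3k`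
edges of the matching have both ends pendant for `x`. Exchanging an edge `uv` of the matching for
a pendant edge at `u` of one free colour and a pendant edge at `v` of another shows that no edge
has both ends pendant for three free colours. Double counting gives `(n - k)(2n - 3k) ≤ 2k`,
which forces `2n ≤ 3k + 4`.
-/

open Finset Function

namespace Sym2

variable {α : Type*} [DecidableEq α]

lemma card_toFinset_le_two (z : Sym2 α) : #z.toFinset ≤ 2 := by
  rw [card_toFinset]
  split_ifs <;> omega

lemma exists_eq_mk_of_toFinset_inter_eq_singleton {z : Sym2 α} {W : Finset α} {u : α}
    (hz : ¬z.IsDiag) (h : z.toFinset ∩ W = {u}) : ∃ t ∉ W, z = s(u, t) := by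
  have hu : u ∈ z := mem_toFinset.mp (mem_of_mem_inter_left (h ▸ mem_singleton_self u))
  refine ⟨Mem.other hu, fun ht => other_ne hz hu ?_, (other_spec hu).symm⟩
  rw [← mem_singleton, ← h]
  exact mem_inter.mpr ⟨mem_toFinset.mpr (other_mem hu), ht⟩

end Sym2

namespace Finset

variable {ι α : Type*} [DecidableEq α]

/-- Covering `B` by sets of size at most two, only the sets lying inside `B` can contribute
a second element. -/
lemma card_le_card_add_card_filter_subset {s : Finset ι} {t : ι → Finset α} {B : Finset α}
    (ht : ∀ i ∈ s, #(t i) ≤ 2) (hB : B ⊆ s.biUnion t) :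
    #B ≤ #s + #{i ∈ s | t i ⊆ B} := by
  have hterm : ∀ i ∈ s, #(B ∩ t i) ≤ 1 + if t i ⊆ B then 1 else 0 := by
    intro i hi
    split_ifs with hsub
    · exact (card_le_card inter_subset_right).trans (ht i hi)
    · have : B ∩ t i ⊂ t i :=
        ssubset_of_subset_of_ne inter_subset_right fun h => hsub (h ▸ inter_subset_left)
      have := card_lt_card this
      have := ht i hi
      omega
  calc #B = #(s.biUnion fun i => B ∩ t i) := by
        rw [← inter_biUnion, inter_eq_left.mpr hB]
    _ ≤ ∑ i ∈ s, #(B ∩ t i) := card_biUnion_le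
    _ ≤ ∑ i ∈ s, (1 + if t i ⊆ B then 1 else 0) := sum_le_sum hterm
    _ = #s + #{i ∈ s | t i ⊆ B} := by rw [sum_add_distrib, card_filter]; simp

end Finset

namespace RainbowMatching

variable {ι V : Type*}

open scoped Classical in
noncomputable def pendantVerts (M : Finset (Sym2 V)) (W : Finset V) : Finset V :=
  {u ∈ W | ∃ t ∉ W, s(u, t) ∈ M}

lemma mem_pendantVerts {M : Finset (Sym2 V)} {W : Finset V} {u : V} :
    u ∈ pendantVerts M W ↔ u ∈ W ∧ ∃ t ∉ W, s(u, t) ∈ M := by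
  simp [pendantVerts]

/-- An edge of `M` meeting `W` twice uses two vertices of `W`; one meeting it once uses a vertex
of `W` and contributes a pendant vertex. -/
lemma two_mul_card_le_card_add_card_pendantVerts [DecidableEq V] {M : Finset (Sym2 V)}
    {W : Finset V} (hM : (M : Set (Sym2 V)).PairwiseDisjoint Sym2.toFinset)
    (hloop : ∀ e ∈ M, ¬e.IsDiag) (hmeet : ∀ e ∈ M, ∃ v ∈ e, v ∈ W) :
    2 * #M ≤ #W + #(pendantVerts M W) := by
  have hdisj : (M : Set (Sym2 V)).PairwiseDisjoint fun e => e.toFinset ∩ W :=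
    hM.mono fun _ => inter_subset_left
  have hsumW : ∑ e ∈ M, #(e.toFinset ∩ W) ≤ #W := by
    rw [← card_biUnion hdisj]
    exact card_le_card (biUnion_subset.mpr fun _ _ => inter_subset_right)
  have hsumT : ∑ e ∈ M with #(e.toFinset ∩ W) = 1, #(e.toFinset ∩ W) ≤ #(pendantVerts M W) := by
    rw [← card_biUnion (hdisj.subset (coe_subset.mpr (filter_subset _ _)))]
    refine card_le_card (biUnion_subset.mpr fun e he => ?_)
    obtain ⟨heM, he1⟩ := mem_filter.mp he
    obtain ⟨u, hu⟩ := card_eq_one.mp he1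
    obtain ⟨t, ht, rfl⟩ := Sym2.exists_eq_mk_of_toFinset_inter_eq_singleton (hloop e heM) hu
    rw [hu, singleton_subset_iff]
    exact mem_pendantVerts.mpr ⟨mem_of_mem_inter_right (hu ▸ mem_singleton_self u), t, ht, heM⟩
  have hterm : ∀ e ∈ M, 2 ≤ #(e.toFinset ∩ W) +
      if #(e.toFinset ∩ W) = 1 then #(e.toFinset ∩ W) else 0 := by
    intro e he
    obtain ⟨v, hv, hvW⟩ := hmeet e he
    have : 0 < #(e.toFinset ∩ W) :=
      card_pos.mpr ⟨v, mem_inter.mpr ⟨Sym2.mem_toFinset.mpr hv, hvW⟩⟩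
    have : #(e.toFinset ∩ W) ≤ 2 := (card_le_card inter_subset_left).trans e.card_toFinset_le_two
    split_ifs <;> omega
  calc 2 * #M = ∑ _e ∈ M, 2 := by rw [sum_const, smul_eq_mul, mul_comm]
    _ ≤ ∑ e ∈ M, (#(e.toFinset ∩ W) +
          if #(e.toFinset ∩ W) = 1 then #(e.toFinset ∩ W) else 0) := sum_le_sum hterm
    _ = ∑ e ∈ M, #(e.toFinset ∩ W) + ∑ e ∈ M with #(e.toFinset ∩ W) = 1, #(e.toFinset ∩ W) := by
      rw [sum_add_distrib, sum_filter]
    _ ≤ #W + #(pendantVerts M W) := add_le_add hsumW hsumT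

def IsRainbow (F : ι → Finset (Sym2 V)) (I : Finset ι) (c : ι → Sym2 V) : Prop :=
  (∀ i ∈ I, c i ∈ F i) ∧ ∀ i ∈ I, ∀ j ∈ I, i ≠ j → ∀ v, v ∈ c i → v ∉ c j

def IsMaximumRainbow (F : ι → Finset (Sym2 V)) (I : Finset ι) (c : ι → Sym2 V) : Prop :=
  IsRainbow F I c ∧ ∀ J c', IsRainbow F J c' → #J ≤ #I

variable {F : ι → Finset (Sym2 V)} {I J : Finset ι} {c : ι → Sym2 V}

lemma exists_isMaximumRainbow [Fintype ι] [Nonempty (Sym2 V)] (F : ι → Finset (Sym2 V)) :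
    ∃ I c, IsMaximumRainbow F I c := by
  classical
  obtain ⟨I, hI, hmax⟩ := exists_max_image {J : Finset ι | ∃ c, IsRainbow F J c} card
    ⟨∅, mem_filter.mpr ⟨mem_univ _, Classical.arbitrary _, by simp [IsRainbow]⟩⟩
  obtain ⟨c, hc⟩ := (mem_filter.mp hI).2
  exact ⟨I, c, hc, fun J c' hJ => hmax J (mem_filter.mpr ⟨mem_univ _, c', hJ⟩)⟩

namespace IsRainbow

lemma mono (h : IsRainbow F I c) (hJI : J ⊆ I) : IsRainbow F J c :=
  ⟨fun i hi => h.1 i (hJI hi), fun i hi j hj => h.2 i (hJI hi) j (hJI hj)⟩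

lemma insert [DecidableEq ι] (h : IsRainbow F I c) {x : ι} {e : Sym2 V} (hx : x ∉ I)
    (he : e ∈ F x) (hdisj : ∀ i ∈ I, ∀ v ∈ e, v ∉ c i) :
    IsRainbow F (insert x I) (update c x e) := by
  have hne : ∀ i ∈ I, i ≠ x := fun i hi hix => hx (hix ▸ hi)
  refine ⟨fun i hi => ?_, fun i hi j hj hij v hvi hvj => ?_⟩
  · rcases mem_insert.mp hi with rfl | hiI
    · simpa using he
    · simpa [hne i hiI] using h.1 i hiI
  rcases mem_insert.mp hi with rfl | hiI <;> rcases mem_insert.mp hj with rfl | hjI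
  · exact hij rfl
  · simp only [update_self, update_of_ne (hne j hjI)] at hvi hvj
    exact hdisj j hjI v hvi hvj
  · simp only [update_self, update_of_ne (hne i hiI)] at hvi hvj
    exact hdisj i hiI v hvj hvi
  · simp only [update_of_ne (hne i hiI), update_of_ne (hne j hjI)] at hvi hvj
    exact h.2 i hiI j hjI hij v hvi hvj

end IsRainbow

def verts [DecidableEq V] (I : Finset ι) (c : ι → Sym2 V) : Finset V :=
  I.biUnion fun i => (c i).toFinset

lemma mem_verts [DecidableEq V] {v : V} : v ∈ verts I c ↔ ∃ i ∈ I, v ∈ c i := by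
  simp [verts]

lemma card_verts_le [DecidableEq V] : #(verts I c) ≤ 2 * #I :=
  card_biUnion_le.trans <| (sum_le_sum fun i _ => (c i).card_toFinset_le_two).trans_eq <| by
    rw [sum_const, smul_eq_mul, mul_comm]

namespace IsMaximumRainbow

variable [DecidableEq ι] [DecidableEq V]

lemma exists_mem_verts (hmax : IsMaximumRainbow F I c) {x : ι} (hx : x ∉ I) {e : Sym2 V}
    (he : e ∈ F x) : ∃ v ∈ e, v ∈ verts I c := by
  by_contra! h
  have := hmax.2 _ _ <|
    hmax.1.insert hx he fun i hi v hv hvi => h v hv (mem_verts.mpr ⟨i, hi, hvi⟩)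
  rw [card_insert_of_notMem hx] at this
  omega

/-- Otherwise replacing `c i = uv` by `ut` and `vr` would give a larger rainbow matching. -/
lemma eq_of_mk_mem (hmax : IsMaximumRainbow F I c) {x y i : ι} (hx : x ∉ I) (hy : y ∉ I)
    (hxy : x ≠ y) (hi : i ∈ I) {u v t r : V} (hc : c i = s(u, v)) (huv : u ≠ v)
    (hut : s(u, t) ∈ F x) (hvr : s(v, r) ∈ F y) (ht : t ∉ verts I c) (hr : r ∉ verts I c) :
    t = r := by
  by_contra htr
  have hu : u ∈ verts I c := mem_verts.mpr ⟨i, hi, hc ▸ Sym2.mem_mk_left u v⟩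
  have hv : v ∈ verts I c := mem_verts.mpr ⟨i, hi, hc ▸ Sym2.mem_mk_right u v⟩
  have hoff : ∀ j ∈ I.erase i, ∀ a b, a ∈ c i → b ∉ verts I c → ∀ w ∈ s(a, b), w ∉ c j := by
    intro j hj a b ha hb w hw
    rcases Sym2.mem_iff.mp hw with rfl | rfl
    · exact hmax.1.2 i hi j (mem_of_mem_erase hj) (ne_of_mem_erase hj).symm w ha
    · exact fun hwj => hb (mem_verts.mpr ⟨j, mem_of_mem_erase hj, hwj⟩)
  have hrainbow_y := (hmax.1.mono (erase_subset i I)).insert (fun h => hy (mem_of_mem_erase h))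
    hvr (hoff · · v r (hc ▸ Sym2.mem_mk_right u v) hr)
  have hrainbow_xy := hrainbow_y.insert (x := x) (by simp [hxy, hx]) hut <| by
    intro j hj w hw
    rcases mem_insert.mp hj with rfl | hjI
    · rw [update_self, Sym2.mem_iff, not_or]
      rcases Sym2.mem_iff.mp hw with rfl | rfl
      · exact ⟨huv, fun h => hr (h ▸ hu)⟩
      · exact ⟨fun h => ht (h ▸ hv), htr⟩
    · rw [update_of_ne (by rintro rfl; exact hy (mem_of_mem_erase hjI))]
      exact hoff j hjI u t (hc ▸ Sym2.mem_mk_left u v) ht w hw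
  have := hmax.2 _ _ hrainbow_xy
  rw [card_insert_of_notMem (by simp [hxy, hx]), card_insert_of_notMem (by simp [hy]),
    card_erase_of_mem hi] at this
  have := card_pos.mpr ⟨i, hi⟩
  omega

lemma two_mul_card_le (hmax : IsMaximumRainbow F I c) {x : ι} (hloop : ∀ e ∈ F x, ¬e.IsDiag)
    (hmatch : (F x : Set (Sym2 V)).PairwiseDisjoint Sym2.toFinset) (hx : x ∉ I) :
    2 * #(F x) ≤ 3 * #I + #{i ∈ I | (c i).toFinset ⊆ pendantVerts (F x) (verts I c)} := by
  have := two_mul_card_le_card_add_card_pendantVerts hmatch hloop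
    fun e he => hmax.exists_mem_verts hx he
  have := card_le_card_add_card_filter_subset (s := I) (t := fun i => (c i).toFinset)
    (B := pendantVerts (F x) (verts I c)) (fun i _ => (c i).card_toFinset_le_two)
    fun u hu => (mem_pendantVerts.mp hu).1
  have : #(verts I c) ≤ 2 * #I := card_verts_le
  omega

/-- If `c i = uv` had both ends pendant for three free colours `x, y, z`, `eq_of_mk_mem` applied
to `(x, z)`, `(y, z)` and `(y, x)` would route the pendant edges of `x` at `u` and at `v` through
the same outer vertex. -/
lemma card_filter_subset_pendantVerts_le_two [Fintype ι] (hmax : IsMaximumRainbow F I c)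
    (hloop : ∀ x, ∀ e ∈ F x, ¬e.IsDiag)
    (hmatch : ∀ x, (F x : Set (Sym2 V)).PairwiseDisjoint Sym2.toFinset) {i : ι} (hi : i ∈ I) :
    #{x ∈ Iᶜ | (c i).toFinset ⊆ pendantVerts (F x) (verts I c)} ≤ 2 := by
  by_contra! h
  obtain ⟨x, hx, y, hy, z, hz, hxy, hxz, hyz⟩ := two_lt_card.mp h
  simp only [mem_filter, mem_compl] at hx hy hz
  obtain ⟨u, v, hc⟩ : ∃ u v, c i = s(u, v) := Sym2.exists.mp ⟨_, rfl⟩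
  have huv : u ≠ v := by simpa [hc] using hloop i (c i) (hmax.1.1 i hi)
  have pendant : ∀ {x w}, (c i).toFinset ⊆ pendantVerts (F x) (verts I c) → w ∈ c i →
      ∃ t ∉ verts I c, s(w, t) ∈ F x := fun hsub hw =>
    (mem_pendantVerts.mp (hsub (Sym2.mem_toFinset.mpr hw))).2
  have hu : u ∈ c i := hc ▸ Sym2.mem_mk_left u v
  have hv : v ∈ c i := hc ▸ Sym2.mem_mk_right u v
  obtain ⟨a, ha, hxu⟩ := pendant hx.2 hu
  obtain ⟨b, hb, hxv⟩ := pendant hx.2 hv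
  obtain ⟨a', ha', hyu⟩ := pendant hy.2 hu
  obtain ⟨b', hb', hzv⟩ := pendant hz.2 hv
  have hab : a = b := by
    rw [hmax.eq_of_mk_mem hx.1 hz.1 hxz hi hc huv hxu hzv ha hb',
      ← hmax.eq_of_mk_mem hy.1 hz.1 hyz hi hc huv hyu hzv ha' hb',
      hmax.eq_of_mk_mem hy.1 hx.1 hxy.symm hi hc huv hyu hxv ha' hb]
  subst hab
  exact disjoint_left.mp (hmatch x hxu hxv fun h => huv (Sym2.congr_left.mp h))
    (Sym2.mem_toFinset.mpr (Sym2.mem_mk_right u a))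
    (Sym2.mem_toFinset.mpr (Sym2.mem_mk_right v a))

lemma two_mul_le_three_mul_card_add_four [Fintype ι] (hmax : IsMaximumRainbow F I c)
    (hloop : ∀ x, ∀ e ∈ F x, ¬e.IsDiag)
    (hmatch : ∀ x, (F x : Set (Sym2 V)).PairwiseDisjoint Sym2.toFinset) {n : ℕ}
    (hn : n ≤ Fintype.card ι) (hsize : ∀ x, n ≤ #(F x)) :
    2 * n ≤ 3 * #I + 4 := by
  by_contra! h
  have hdouble := card_mul_le_card_mul
    (fun x i => (c i).toFinset ⊆ pendantVerts (F x) (verts I c)) (s := Iᶜ) (t := I)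
    (m := 2 * n - 3 * #I) (n := 2)
    (fun x hx => by
      have := hmax.two_mul_card_le (hloop x) (hmatch x) (mem_compl.mp hx)
      have := hsize x
      simp only [bipartiteAbove]
      omega)
    fun i hi => hmax.card_filter_subset_pendantVerts_le_two hloop hmatch hi
  have : n - #I ≤ #Iᶜ := by rw [card_compl]; omega
  have := (Nat.mul_le_mul_right (2 * n - 3 * #I) this).trans hdouble
  have := Nat.mul_le_mul_left (n - #I) (show 5 ≤ 2 * n - 3 * #I by omega)
  omega

end IsMaximumRainbow

end RainbowMatching

/-- If `F₁, …, Fₙ` are matchings of size `n` in a simple graph `G`,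
then there is a rainbow matching of size at least `(2/3)n - 4/3`. -/
theorem stmt_0 {V : Type*} (G : SimpleGraph V) (n : ℕ)
    (F : Fin n → Finset (Sym2 V))
    (hedges : ∀ i, ∀ e ∈ F i, e ∈ G.edgeSet)
    (hmatch : ∀ i, ∀ e ∈ F i, ∀ f ∈ F i, e ≠ f → ∀ v, v ∈ e → v ∉ f)
    (hsize : ∀ i, (F i).card = n) :
    ∃ (I : Finset (Fin n)) (c : Fin n → Sym2 V),
      (∀ i ∈ I, c i ∈ F i) ∧
      (∀ i ∈ I, ∀ j ∈ I, i ≠ j → ∀ v, v ∈ c i → v ∉ c j) ∧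
      (2 / 3 : ℝ) * n - 4 / 3 ≤ (I.card : ℝ) := by
  classical
  rcases Nat.eq_zero_or_pos n with rfl | hn
  · exact ⟨∅, Fin.elim0, by simp, by simp, by norm_num⟩
  obtain ⟨e₀, -⟩ := card_pos.mp ((hsize ⟨0, hn⟩).symm ▸ hn)
  have : Nonempty (Sym2 V) := ⟨e₀⟩
  obtain ⟨I, c, hmax⟩ := RainbowMatching.exists_isMaximumRainbow F
  have hbound := hmax.two_mul_le_three_mul_card_add_four
    (fun i e he => G.not_isDiag_of_mem_edgeSet (hedges i e he))
    (fun i e he f hf hef => disjoint_left.mpr fun v hve hvf =>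
      hmatch i e he f hf hef v (Sym2.mem_toFinset.mp hve) (Sym2.mem_toFinset.mp hvf))
    (Fintype.card_fin n).ge fun i => (hsize i).ge
  refine ⟨I, c, hmax.1.1, hmax.1.2, ?_⟩
  have : (2 * n : ℝ) ≤ 3 * #I + 4 := by exact_mod_cast hbound
  linarith
end

section
/- Let r ≥ 2 and let F_1, …, F_n be matchings, each of size n, in an r-uniform hypergraph. Then there exists a rainbow matching of size at least (n − 1/2 − 3/(4r−6))/(r − 1/2). -/
/-!
Take a rainbow matching `{c j : j ∈ I}` of maximum size `k`, with vertex set `S`, so `|S| ≤ kr`.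
For an unused colour `i`, every edge of `F i` meets `S`, hence `2n ≤ |S| + |Aᵢ|`, where `Aᵢ` is the
set of vertices `v` such that some edge of `F i` meets `S` exactly in `v`. An edge `c j` contributes
at most `r - 1` vertices to `Aᵢ` unless `c j ⊆ Aᵢ`, and a switching argument shows that this
happens for at most `r` unused colours. Summing over the `n - k` unused colours gives
`(n - k)(2n + k) ≤ 2rk(n - k) + rk`, a quadratic inequality in `s = 2n - (2r - 1)k` which forces
`s ≤ 2r / (2r - 3)`.
-/

open Finset

structure IsRainbowMatching {ι V : Type*} (F : ι → Finset (Finset V)) (I : Finset ι)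
    (c : ι → Finset V) : Prop where
  mem : ∀ i ∈ I, c i ∈ F i
  pairwiseDisjoint : (I : Set ι).PairwiseDisjoint c

theorem exists_isRainbowMatching_forall_card_le {ι V : Type*} [Fintype ι]
    (F : ι → Finset (Finset V)) :
    ∃ I c, IsRainbowMatching F I c ∧ ∀ I' c', IsRainbowMatching F I' c' → #I' ≤ #I := by
  classical
  have hempty : IsRainbowMatching F ∅ fun _ => ∅ := ⟨by simp, by simp⟩
  obtain ⟨I, hI, hmax⟩ := ({I | ∃ c, IsRainbowMatching F I c} : Finset (Finset ι)).exists_max_image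
    card ⟨∅, mem_filter.2 ⟨mem_univ _, _, hempty⟩⟩
  obtain ⟨c, hc⟩ := (mem_filter.1 hI).2
  exact ⟨I, c, hc, fun I' c' h => hmax I' (mem_filter.2 ⟨mem_univ _, c', h⟩)⟩

theorem exists_mem_of_pairwiseDisjoint_of_card_le {α β : Type*} [DecidableEq β] {s : Finset α}
    {t : α → Finset β} {W : Finset β} (hdisj : (s : Set α).PairwiseDisjoint t)
    (hne : ∀ a ∈ s, (t a ∩ W).Nonempty) (hcard : #W ≤ #s) {z : β} (hz : z ∈ W) :
    ∃ a ∈ s, z ∈ t a := by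
  have hsub : s.biUnion (t · ∩ W) ⊆ W := biUnion_subset.2 fun _ _ => inter_subset_right
  have hdisj' : (s : Set α).PairwiseDisjoint (t · ∩ W) :=
    hdisj.mono fun _ => inter_subset_left
  rw [← eq_of_subset_of_card_le hsub (hcard.trans (card_le_card_biUnion hdisj' hne))] at hz
  obtain ⟨a, ha, hza⟩ := mem_biUnion.1 hz
  exact ⟨a, ha, (mem_inter.1 hza).1⟩

def pendants {V : Type*} [DecidableEq V] (M : Finset (Finset V)) (S : Finset V) : Finset V :=
  {v ∈ S | ∃ g ∈ M, g ∩ S = {v}}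

section

variable {ι V : Type*} [DecidableEq V]

theorem two_mul_card_le_card_add_card_pendants {M : Finset (Finset V)} {S : Finset V}
    (hM : (M : Set (Finset V)).Pairwise Disjoint) (hmeet : ∀ g ∈ M, (g ∩ S).Nonempty) :
    2 * #M ≤ #S + #(pendants M S) := by
  set P := {g ∈ M | #(g ∩ S) = 1}
  have hdisj : (M : Set (Finset V)).PairwiseDisjoint (· ∩ S) := fun g hg g' hg' h =>
    (hM hg hg' h).mono inter_subset_left inter_subset_left
  have hsum : ∑ g ∈ M, #(g ∩ S) ≤ #S := by
    rw [← card_biUnion hdisj]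
    exact card_le_card (biUnion_subset.2 fun _ _ => inter_subset_right)
  have hP : #P ≤ #(pendants M S) := by
    refine (card_le_card_biUnion (hdisj.subset (coe_subset.2 (filter_subset _ _)))
      fun g hg => hmeet g (mem_filter.1 hg).1).trans (card_le_card ?_)
    refine biUnion_subset.2 fun g hg v hv => ?_
    obtain ⟨hgM, hg1⟩ := mem_filter.1 hg
    obtain ⟨w, hw⟩ := card_eq_one.1 hg1
    rw [hw, mem_singleton] at hv
    rw [hv]
    exact mem_filter.2 ⟨(mem_inter.1 (hw ▸ mem_singleton_self w)).2, g, hgM, hw⟩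
  have hpoint : ∀ g ∈ M, 2 ≤ #(g ∩ S) + if #(g ∩ S) = 1 then 1 else 0 := by
    intro g hg
    have := (hmeet g hg).card_pos
    split_ifs <;> omega
  calc 2 * #M = ∑ _g ∈ M, 2 := by rw [sum_const, smul_eq_mul, mul_comm]
    _ ≤ ∑ g ∈ M, (#(g ∩ S) + if #(g ∩ S) = 1 then 1 else 0) := sum_le_sum hpoint
    _ = ∑ g ∈ M, #(g ∩ S) + #P := by rw [sum_add_distrib, card_filter]
    _ ≤ #S + #(pendants M S) := add_le_add hsum hP

theorem card_add_card_le_of_subset_biUnion {I : Finset ι} {c : ι → Finset V} {r : ℕ}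
    (hc : ∀ j ∈ I, #(c j) = r) {A : Finset V} (hA : A ⊆ I.biUnion c) :
    #A + #I ≤ r * #I + #{j ∈ I | c j ⊆ A} := by
  have hcover : #A ≤ ∑ j ∈ I, #(c j ∩ A) := by
    calc #A = #(I.biUnion c ∩ A) := by rw [inter_eq_right.2 hA]
      _ ≤ ∑ j ∈ I, #(c j ∩ A) := biUnion_inter I c A ▸ card_biUnion_le
  have hpoint : ∀ j ∈ I, #(c j ∩ A) + 1 ≤ r + if c j ⊆ A then 1 else 0 := by
    intro j hj
    split_ifs with hsub
    · have := card_le_card (inter_subset_left (s₁ := c j) (s₂ := A))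
      have := hc j hj
      omega
    · have : c j ∩ A ⊂ c j := ssubset_of_subset_of_ne inter_subset_left (mt inter_eq_left.1 hsub)
      have := card_lt_card this
      have := hc j hj
      omega
  calc #A + #I ≤ ∑ j ∈ I, (#(c j ∩ A) + 1) := by
        rw [sum_add_distrib, card_eq_sum_ones I]
        exact add_le_add_left hcover _
    _ ≤ ∑ j ∈ I, (r + if c j ⊆ A then 1 else 0) := sum_le_sum hpoint
    _ = r * #I + #{j ∈ I | c j ⊆ A} := by
        rw [sum_add_distrib, sum_const, smul_eq_mul, mul_comm, card_filter]

end

namespace IsRainbowMatching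

variable {ι V : Type*} {F : ι → Finset (Finset V)} {I : Finset ι}
  {c : ι → Finset V}

theorem subset (h : IsRainbowMatching F I c) {J : Finset ι} (hJ : J ⊆ I) :
    IsRainbowMatching F J c :=
  ⟨fun i hi => h.mem i (hJ hi), h.pairwiseDisjoint.subset (coe_subset.2 hJ)⟩

theorem disjoint_of_inter_biUnion_eq_singleton [DecidableEq V] (h : IsRainbowMatching F I c)
    {j : ι} (hj : j ∈ I) {v : V} (hv : v ∈ c j) {g : Finset V} (hgS : g ∩ I.biUnion c = {v}) {m : ι}
    (hm : m ∈ I) (hmj : m ≠ j) : Disjoint g (c m) := by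
  refine disjoint_left.2 fun a hag ham => ?_
  have hav : a = v := mem_singleton.1 (hgS ▸ mem_inter.2 ⟨hag, mem_biUnion.2 ⟨m, hm, ham⟩⟩)
  exact disjoint_left.1 (h.pairwiseDisjoint hj hm hmj.symm) (hav ▸ hv) ham

variable [DecidableEq ι]

theorem insert_update (h : IsRainbowMatching F I c) {i : ι} {g : Finset V} (hi : i ∉ I)
    (hg : g ∈ F i) (hdisj : ∀ m ∈ I, Disjoint g (c m)) :
    IsRainbowMatching F (insert i I) (Function.update c i g) := by
  have hupdate : ∀ m ∈ I, Function.update c i g m = c m := fun m hm =>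
    Function.update_of_ne (by rintro rfl; exact hi hm) _ _
  refine ⟨fun m hm => ?_, ?_⟩
  · rcases mem_insert.1 hm with rfl | hm
    · simpa
    · rw [hupdate m hm]; exact h.mem m hm
  · rw [coe_insert, Set.pairwiseDisjoint_insert_of_notMem (mem_coe.not.2 hi)]
    refine ⟨fun a ha b hb hab => ?_, fun m hm => ?_⟩
    · simpa [Function.onFun, hupdate a ha, hupdate b hb] using h.pairwiseDisjoint ha hb hab
    · simpa [hupdate m hm] using hdisj m hm

variable [DecidableEq V]

theorem inter_biUnion_nonempty (h : IsRainbowMatching F I c)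
    (hmax : ∀ I' c', IsRainbowMatching F I' c' → #I' ≤ #I) {i : ι} (hi : i ∉ I) {g : Finset V}
    (hg : g ∈ F i) : (g ∩ I.biUnion c).Nonempty := by
  rw [← not_disjoint_iff_nonempty_inter]
  intro hdisj
  have := hmax _ _ <| h.insert_update hi hg fun m hm =>
    hdisj.mono_right (subset_biUnion_of_mem c hm)
  rw [card_insert_of_notMem hi] at this
  omega

/-- Otherwise `c j` could be traded for `g` and `g'`. -/
theorem not_disjoint_of_inter_biUnion_eq_singleton (h : IsRainbowMatching F I c)
    (hmax : ∀ I' c', IsRainbowMatching F I' c' → #I' ≤ #I) {i i' : ι} (hi : i ∉ I) (hi' : i' ∉ I)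
    (hii' : i ≠ i') {j : ι} (hj : j ∈ I) {v u : V} (hv : v ∈ c j) (hu : u ∈ c j)
    {g g' : Finset V} (hg : g ∈ F i) (hg' : g' ∈ F i') (hgS : g ∩ I.biUnion c = {v})
    (hg'S : g' ∩ I.biUnion c = {u}) : ¬Disjoint g g' := by
  intro hdisj
  have hi'j : i' ∉ I.erase j := fun hmem => hi' (mem_of_mem_erase hmem)
  have hij : i ∉ insert i' (I.erase j) := by
    simp only [mem_insert, mem_erase, not_or, not_and]
    exact ⟨hii', fun _ hmem => hi hmem⟩
  have hM' := (h.subset (erase_subset j I)).insert_update hi'j hg' fun m hm =>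
    h.disjoint_of_inter_biUnion_eq_singleton hj hu hg'S (mem_of_mem_erase hm) (ne_of_mem_erase hm)
  have hM'' := hM'.insert_update hij hg fun m hm => by
    rcases mem_insert.1 hm with rfl | hmj
    · simpa using hdisj
    · rw [Function.update_of_ne (by rintro rfl; exact hi'j hmj)]
      exact h.disjoint_of_inter_biUnion_eq_singleton hj hv hgS (mem_of_mem_erase hmj)
        (ne_of_mem_erase hmj)
  have hcard := hmax _ _ hM''
  rw [card_insert_of_notMem hij, card_insert_of_notMem hi'j, card_erase_of_mem hj] at hcard
  have := card_pos.2 ⟨j, hj⟩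
  omega

variable {r : ℕ}

/-- The `r - 1` edges of `F i'` hanging at the other vertices of `c j` all meet `g ∖ {v}`, which
has only `r - 1` vertices, and they are disjoint, so they cover it. -/
theorem exists_mem_of_subset_pendants (h : IsRainbowMatching F I c)
    (hmax : ∀ I' c', IsRainbowMatching F I' c' → #I' ≤ #I) (huniform : ∀ i, ∀ e ∈ F i, #e = r)
    (hmatch : ∀ i, (F i : Set (Finset V)).Pairwise Disjoint) {i i' : ι} (hi : i ∉ I)
    (hi' : i' ∉ I) (hii' : i ≠ i') {j : ι} (hj : j ∈ I)
    (hsat : c j ⊆ pendants (F i') (I.biUnion c)) {v : V} (hv : v ∈ c j) {g : Finset V}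
    (hg : g ∈ F i) (hgS : g ∩ I.biUnion c = {v}) {z : V} (hz : z ∈ g) (hzv : z ≠ v) :
    ∃ u ∈ (c j).erase v, ∃ g' ∈ F i', g' ∩ I.biUnion c = {u} ∧ z ∈ g' := by
  have hpend : ∀ u ∈ (c j).erase v, ∃ g' ∈ F i', g' ∩ I.biUnion c = {u} := fun u hu =>
    (mem_filter.1 (hsat (mem_of_mem_erase hu))).2
  choose! p hpF hpS using hpend
  have hdisj : (((c j).erase v : Finset V) : Set V).PairwiseDisjoint p := by
    intro u hu u' hu' huu'
    refine hmatch i' (hpF u hu) (hpF u' hu') fun hp => huu' ?_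
    rw [← singleton_inj, ← hpS u hu, ← hpS u' hu', hp]
  have hmeet : ∀ u ∈ (c j).erase v, (p u ∩ g.erase v).Nonempty := by
    intro u hu
    obtain ⟨w, hwg, hwp⟩ := not_disjoint_iff.1 <| h.not_disjoint_of_inter_biUnion_eq_singleton
      hmax hi hi' hii' hj hv (mem_of_mem_erase hu) hg (hpF u hu) hgS (hpS u hu)
    refine ⟨w, mem_inter.2 ⟨hwp, mem_erase.2 ⟨?_, hwg⟩⟩⟩
    rintro rfl
    have : w ∈ p u ∩ I.biUnion c := mem_inter.2 ⟨hwp, mem_biUnion.2 ⟨j, hj, hv⟩⟩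
    rw [hpS u hu, mem_singleton] at this
    exact ne_of_mem_erase hu this.symm
  have hvg : v ∈ g := mem_of_mem_inter_left (hgS ▸ mem_singleton_self v)
  have hcard : #(g.erase v) ≤ #((c j).erase v) := by
    rw [card_erase_of_mem hvg, card_erase_of_mem hv, huniform i g hg,
      huniform j (c j) (h.mem j hj)]
  obtain ⟨u, hu, hzu⟩ :=
    exists_mem_of_pairwiseDisjoint_of_card_le hdisj hmeet hcard (mem_erase.2 ⟨hzv, hz⟩)
  exact ⟨u, hu, p u, hpF u hu, hpS u hu, hzu⟩

/-- Fix a vertex `z ∉ ⋃ c` on a pendant edge of one of these colours. In every such colour `z`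
lies on the pendant edge at some vertex of `c j`, and by `exists_mem_of_subset_pendants` these
vertices are distinct for distinct colours. -/
theorem card_filter_subset_pendants_le (h : IsRainbowMatching F I c)
    (hmax : ∀ I' c', IsRainbowMatching F I' c' → #I' ≤ #I) (huniform : ∀ i, ∀ e ∈ F i, #e = r)
    (hmatch : ∀ i, (F i : Set (Finset V)).Pairwise Disjoint) (hr : 2 ≤ r) {j : ι} (hj : j ∈ I)
    {U : Finset ι} (hU : Disjoint U I) :
    #{i ∈ U | c j ⊆ pendants (F i) (I.biUnion c)} ≤ r := by
  set S := I.biUnion c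
  set T := {i ∈ U | c j ⊆ pendants (F i) S}
  have hcj : #(c j) = r := huniform j (c j) (h.mem j hj)
  obtain hT | ⟨i₀, hi₀⟩ := T.eq_empty_or_nonempty
  · simp [hT]
  have hTI : ∀ i ∈ T, i ∉ I := fun i hi => disjoint_left.1 hU (mem_filter.1 hi).1
  have hTsat : ∀ i ∈ T, c j ⊆ pendants (F i) S := fun i hi => (mem_filter.1 hi).2
  obtain ⟨v₀, hv₀⟩ := card_pos.1 (by omega : 0 < #(c j))
  obtain ⟨g₀, hg₀, hg₀S⟩ := (mem_filter.1 (hTsat i₀ hi₀ hv₀)).2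
  obtain ⟨z, hz, hzv₀⟩ := exists_mem_ne (by rw [huniform i₀ g₀ hg₀]; omega) v₀
  have hzS : z ∉ S := fun hzS => hzv₀ (mem_singleton.1 (hg₀S ▸ mem_inter.2 ⟨hz, hzS⟩))
  set Z : ι → Finset V := fun i => {u ∈ c j | ∃ g ∈ F i, g ∩ S = {u} ∧ z ∈ g}
  have hZ_unique : ∀ i, ∀ u ∈ Z i, ∀ u' ∈ Z i, u = u' := by
    intro i u hu u' hu'
    obtain ⟨g, hg, hgS, hzg⟩ := (mem_filter.1 hu).2
    obtain ⟨g', hg', hg'S, hzg'⟩ := (mem_filter.1 hu').2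
    have hgg' : g = g' := by_contra fun hne => disjoint_left.1 (hmatch i hg hg' hne) hzg hzg'
    rw [← singleton_inj, ← hgS, ← hg'S, hgg']
  have hZ_other : ∀ i ∈ T, ∀ i' ∈ T, i ≠ i' → ∀ u ∈ Z i, ∃ u' ∈ Z i', u' ≠ u := by
    intro i hi i' hi' hii' u hu
    obtain ⟨huj, g, hg, hgS, hzg⟩ := mem_filter.1 hu
    have hzu : z ≠ u := by rintro rfl; exact hzS (mem_biUnion.2 ⟨j, hj, huj⟩)
    obtain ⟨u', hu', g', hg', hg'S, hzg'⟩ := h.exists_mem_of_subset_pendants hmax huniform hmatch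
      (hTI i hi) (hTI i' hi') hii' hj (hTsat i' hi') huj hg hgS hzg hzu
    exact ⟨u', mem_filter.2 ⟨mem_of_mem_erase hu', g', hg', hg'S, hzg'⟩, ne_of_mem_erase hu'⟩
  have hv₀Z : v₀ ∈ Z i₀ := mem_filter.2 ⟨hv₀, g₀, hg₀, hg₀S, hz⟩
  have hZ_nonempty : ∀ i ∈ T, (Z i).Nonempty := by
    intro i hi
    obtain rfl | hi₀i := eq_or_ne i₀ i
    · exact ⟨v₀, hv₀Z⟩
    · obtain ⟨u, hu, -⟩ := hZ_other i₀ hi₀ i hi hi₀i v₀ hv₀Z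
      exact ⟨u, hu⟩
  have hZ_disjoint : (T : Set ι).PairwiseDisjoint Z := by
    intro i hi i' hi' hii'
    refine disjoint_left.2 fun u hu hu' => ?_
    obtain ⟨u', hu'', hne⟩ := hZ_other i hi i' hi' hii' u hu
    exact hne (hZ_unique i' u' hu'' u hu')
  calc #T ≤ #(T.biUnion Z) := card_le_card_biUnion hZ_disjoint hZ_nonempty
    _ ≤ #(c j) := card_le_card (biUnion_subset.2 fun _ _ => filter_subset _ _)
    _ = r := hcj

theorem card_compl_mul_le [Fintype ι] (h : IsRainbowMatching F I c)
    (hmax : ∀ I' c', IsRainbowMatching F I' c' → #I' ≤ #I) (huniform : ∀ i, ∀ e ∈ F i, #e = r)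
    (hmatch : ∀ i, (F i : Set (Finset V)).Pairwise Disjoint) (hr : 2 ≤ r) {n : ℕ}
    (hsize : ∀ i, #(F i) = n) :
    #Iᶜ * (2 * n + #I) ≤ #Iᶜ * (2 * r * #I) + r * #I := by
  set S := I.biUnion c
  set A : ι → Finset V := fun i => pendants (F i) S
  have hc : ∀ j ∈ I, #(c j) = r := fun j hj => huniform j (c j) (h.mem j hj)
  have hS : #S ≤ r * #I := by
    rw [mul_comm]
    exact card_biUnion_le_card_mul I c r fun j hj => (hc j hj).le
  have hcolour : ∀ i ∈ Iᶜ, 2 * n + #I ≤ 2 * r * #I + #{j ∈ I | c j ⊆ A i} := by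
    intro i hi
    have hpend : 2 * #(F i) ≤ #S + #(A i) := two_mul_card_le_card_add_card_pendants (hmatch i)
      fun g hg => h.inter_biUnion_nonempty hmax (mem_compl.1 hi) hg
    have hA : #(A i) + #I ≤ r * #I + #{j ∈ I | c j ⊆ A i} :=
      card_add_card_le_of_subset_biUnion hc (filter_subset _ _)
    rw [hsize] at hpend
    linarith
  have hsat : ∑ i ∈ Iᶜ, #{j ∈ I | c j ⊆ A i} ≤ r * #I :=
    calc ∑ i ∈ Iᶜ, #{j ∈ I | c j ⊆ A i} = ∑ j ∈ I, #{i ∈ Iᶜ | c j ⊆ A i} :=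
          sum_card_bipartiteAbove_eq_sum_card_bipartiteBelow _
      _ ≤ ∑ _j ∈ I, r := sum_le_sum fun j hj =>
          h.card_filter_subset_pendants_le hmax huniform hmatch hr hj disjoint_compl_left
      _ = r * #I := by rw [sum_const, smul_eq_mul, mul_comm]
  calc #Iᶜ * (2 * n + #I) = ∑ _i ∈ Iᶜ, (2 * n + #I) := by rw [sum_const, smul_eq_mul]
    _ ≤ ∑ i ∈ Iᶜ, (2 * r * #I + #{j ∈ I | c j ⊆ A i}) := sum_le_sum hcolour
    _ ≤ #Iᶜ * (2 * r * #I) + r * #I := by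
        rw [sum_add_distrib, sum_const, smul_eq_mul]
        exact (add_le_add_iff_left _).2 hsat

end IsRainbowMatching

theorem mul_le_of_mul_add_mul_le {s k r : ℝ} (hk : 0 ≤ k) (hr : 3 < 2 * r)
    (h : s * (s + (2 * r - 3) * k) ≤ 2 * r * k) : s * (2 * r - 3) ≤ 2 * r := by
  by_contra! hlt
  have hs : 0 < s := by nlinarith
  nlinarith [mul_nonneg hk (sub_nonneg.2 hlt.le), mul_pos hs hs]

/-- If `r ≥ 2` and `F₁, …, Fₙ` are matchings of size `n` in an
`r`-uniform hypergraph, then there is a rainbow matching of size at least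
`(n - 1/2 - 3/(4r-6)) / (r - 1/2)`. -/
theorem stmt_1 {V : Type*} (r n : ℕ) (hr : 2 ≤ r)
    (E : Set (Finset V)) (hunifE : ∀ e ∈ E, e.card = r)
    (F : Fin n → Finset (Finset V))
    (hedges : ∀ i, ∀ e ∈ F i, e ∈ E)
    (hmatch : ∀ i, ∀ e ∈ F i, ∀ f ∈ F i, e ≠ f → Disjoint e f)
    (hsize : ∀ i, (F i).card = n) :
    ∃ (I : Finset (Fin n)) (c : Fin n → Finset V),
      (∀ i ∈ I, c i ∈ F i) ∧
      (∀ i ∈ I, ∀ j ∈ I, i ≠ j → Disjoint (c i) (c j)) ∧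
      ((n : ℝ) - 1 / 2 - 3 / (4 * (r : ℝ) - 6)) / ((r : ℝ) - 1 / 2) ≤ (I.card : ℝ) := by
  classical
  obtain ⟨I, c, hM, hmax⟩ := exists_isRainbowMatching_forall_card_le F
  refine ⟨I, c, hM.mem, fun i hi j hj hij => hM.pairwiseDisjoint hi hj hij, ?_⟩
  have hcount := hM.card_compl_mul_le hmax (fun i e he => hunifE e (hedges i e he)) hmatch hr hsize
  have hIn : #I ≤ n := (card_le_univ I).trans_eq (Fintype.card_fin n)
  rw [card_compl, Fintype.card_fin] at hcount
  have hcountℝ : ((n : ℝ) - #I) * (2 * n + #I) ≤ (n - #I) * (2 * r * #I) + r * #I := by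
    exact_mod_cast hcount
  have hrℝ : (2 : ℝ) ≤ r := by exact_mod_cast hr
  have hdefect := mul_le_of_mul_add_mul_le (s := 2 * n - (2 * r - 1) * #I) (r := r)
    (#I).cast_nonneg (by linarith) (by linear_combination 2 * hcountℝ)
  have hquarter : 3 / (4 * (r : ℝ) - 6) * (4 * r - 6) = 3 := div_mul_cancel₀ _ (by linarith)
  rw [div_le_iff₀ (by linarith)]
  nlinarith
end

section
/- Let G be a graph containing no cycle of length 3 and no cycle of length 5, and let F_1, …, F_n be matchings in G, each of size n. Then there exists a rainbow matching of size at least (3/4)n − 9/4. -/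
/-!
Fix a maximum rainbow matching `M = (I, c)` with `r` edges covering the vertex set `W`, and let
`u = n - r` be the number of unused colours. Maximality forces every edge of an unused colour `a`
to meet `W`; counting the vertices of `W` covered by `F a` shows that at least `2u` vertices of
`W` are joined by an `a`-edge to a vertex outside `W`.

For an edge `vw` of `M`, such external edges of two distinct colours at `v` and at `w` would close
a triangle or let `vw` be replaced by two edges. Hence if `v` carries at least three external
colours, `w` carries none, and otherwise `v` and `w` carry at most two together. Calling the edges
of `M` of the first kind rich, double counting gives `2u² ≤ u·#rich + 2·#(I \ rich)`. Finally, an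
edge of an unused colour cannot join the non-rich ends of two rich edges of `M`: this would close a
5-cycle or allow a 2-for-3 exchange. Counting the vertices of `W` covered by one unused matching
again then forces `#(I \ rich) ≥ u`, and the two inequalities give `3n ≤ 4r + 2`.
-/

open SimpleGraph Finset
open scoped Classical

noncomputable section

variable {V ι : Type*}

namespace SimpleGraph

variable {G : SimpleGraph V}

lemma exists_isCycle_length_three {x y z : V} (hxy : G.Adj x y) (hyz : G.Adj y z)
    (hzx : G.Adj z x) : ∃ (u : V) (p : G.Walk u u), p.IsCycle ∧ p.length = 3 :=
  is3Clique_iff_exists_cycle_length_three.1 ⟨_, is3Clique_triple_iff.2 ⟨hxy, hzx.symm, hyz⟩⟩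

lemma exists_isCycle_length_five {a b c d e : V} (hab : G.Adj a b) (hbc : G.Adj b c)
    (hcd : G.Adj c d) (hde : G.Adj d e) (hea : G.Adj e a)
    (hac : a ≠ c) (had : a ≠ d) (hbd : b ≠ d) (hbe : b ≠ e) (hce : c ≠ e) :
    ∃ (u : V) (p : G.Walk u u), p.IsCycle ∧ p.length = 5 := by
  refine ⟨a, .cons hab (.cons hbc (.cons hcd (.cons hde (.cons hea .nil)))), ?_, rfl⟩
  have := hab.ne; have := hbc.ne; have := hcd.ne; have := hde.ne; have := hea.ne
  simp only [Walk.cons_isCycle_iff, Walk.isPath_def, Walk.support_cons, Walk.support_nil,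
    Walk.edges_cons, Walk.edges_nil, List.nodup_cons, List.mem_cons, List.not_mem_nil,
    Sym2.eq_iff]
  grind

end SimpleGraph

def IsRainbowMatching_s2 (F : ι → Finset (Sym2 V)) (I : Finset ι) (c : ι → Sym2 V) : Prop :=
  (∀ i ∈ I, c i ∈ F i) ∧ ∀ i ∈ I, ∀ j ∈ I, i ≠ j → ∀ v ∈ c i, v ∉ c j

def coveredVertices (I : Finset ι) (c : ι → Sym2 V) : Finset V :=
  I.biUnion fun i => (c i).toFinset

lemma mem_coveredVertices {I : Finset ι} {c : ι → Sym2 V} {v : V} :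
    v ∈ coveredVertices I c ↔ ∃ i ∈ I, v ∈ c i := by
  simp [coveredVertices]

lemma isRainbowMatching_singleton {F : ι → Finset (Sym2 V)} {a : ι} {e : Sym2 V}
    (he : e ∈ F a) : IsRainbowMatching_s2 F {a} fun _ => e :=
  ⟨by simpa using he, by simp⟩

namespace IsRainbowMatching_s2

variable {G : SimpleGraph V} {F : ι → Finset (Sym2 V)} {I J A : Finset ι} {c d : ι → Sym2 V}

lemma mono (h : IsRainbowMatching_s2 F I c) (hJ : J ⊆ I) : IsRainbowMatching_s2 F J c :=
  ⟨fun i hi => h.1 i (hJ hi), fun i hi j hj => h.2 i (hJ hi) j (hJ hj)⟩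

lemma insert (h : IsRainbowMatching_s2 F A d) {a : ι} {e : Sym2 V} (he : e ∈ F a)
    (hsep : ∀ k ∈ A, k ≠ a → ∀ v ∈ e, v ∉ d k) :
    IsRainbowMatching_s2 F (insert a A) (Function.update d a e) := by
  have hmem {k} (hk : k ∈ Insert.insert a A) (hka : k ≠ a) : k ∈ A :=
    (mem_insert.1 hk).resolve_left hka
  constructor
  · intro i hi
    by_cases hia : i = a
    · subst hia; simpa using he
    · simpa [hia] using h.1 i (hmem hi hia)
  · intro i hi j hj hij v hv
    simp only [Function.update_apply] at hv ⊢
    split_ifs at hv ⊢ with hja hia hia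
    · exact absurd (hia.trans hja.symm) hij
    · exact fun hve => hsep i (hmem hi hia) hia v hve hv
    · subst hia; exact hsep j (hmem hj hja) hja v hv
    · exact h.2 i (hmem hi hia) j (hmem hj hja) hij v hv

lemma exchange (hc : IsRainbowMatching_s2 F I c) (hd : IsRainbowMatching_s2 F A d) (hJ : J ⊆ I)
    (hsep : ∀ a ∈ A, ∀ v ∈ d a, v ∈ coveredVertices J c ∨ v ∉ coveredVertices I c) :
    IsRainbowMatching_s2 F (I \ J ∪ A) fun k => if k ∈ A then d k else c k := by
  constructor
  · intro k hk
    dsimp only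
    split_ifs with hkA
    · exact hd.1 k hkA
    · exact hc.1 k (mem_sdiff.1 ((mem_union.1 hk).resolve_right hkA)).1
  · intro i hi j hj hij v hv
    have hold {k} (hk : k ∈ I \ J ∪ A) (hkA : k ∉ A) : k ∈ I ∧ k ∉ J :=
      mem_sdiff.1 ((mem_union.1 hk).resolve_right hkA)
    have hfree {k} (hk : k ∈ I \ J ∪ A) (hkA : k ∉ A) {x : V}
        (hx : x ∈ coveredVertices J c ∨ x ∉ coveredVertices I c) : x ∉ c k := by
      obtain ⟨hkI, hkJ⟩ := hold hk hkA
      rcases hx with hx | hx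
      · obtain ⟨l, hl, hxl⟩ := mem_coveredVertices.1 hx
        exact hc.2 l (hJ hl) k hkI (fun hlk => hkJ (hlk ▸ hl)) x hxl
      · exact fun hxk => hx (mem_coveredVertices.2 ⟨k, hkI, hxk⟩)
    by_cases hiA : i ∈ A <;> by_cases hjA : j ∈ A <;>
      simp only [hiA, hjA, if_true, if_false] at hv ⊢
    · exact hd.2 i hiA j hjA hij v hv
    · exact hfree hj hjA (hsep i hiA v hv)
    · exact fun hvj => hfree hi hiA (hsep j hjA v hvj) hv
    · exact hc.2 i (hold hi hiA).1 j (hold hj hjA).1 hij v hv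

lemma sum_coveredVertices {M : Type*} [AddCommMonoid M] (h : IsRainbowMatching_s2 F I c)
    (f : V → M) : ∑ v ∈ coveredVertices I c, f v = ∑ i ∈ I, ∑ v ∈ (c i).toFinset, f v :=
  sum_biUnion fun i hi j hj hij => disjoint_left.2 fun v hvi hvj =>
    h.2 i hi j hj hij v (Sym2.mem_toFinset.1 hvi) (Sym2.mem_toFinset.1 hvj)

lemma adj (h : IsRainbowMatching_s2 F I c) (hF : ∀ i, ∀ e ∈ F i, e ∈ G.edgeSet) {i : ι}
    (hi : i ∈ I) {v w : V} (hc : c i = s(v, w)) : G.Adj v w := by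
  simpa [hc] using hF i _ (h.1 i hi)

lemma card_coveredVertices (h : IsRainbowMatching_s2 F I c)
    (hF : ∀ i, ∀ e ∈ F i, e ∈ G.edgeSet) : #(coveredVertices I c) = 2 * #I := by
  rw [card_eq_sum_ones, h.sum_coveredVertices, mul_comm, ← smul_eq_mul, ← sum_const]
  refine sum_congr rfl fun i hi => ?_
  rw [← card_eq_sum_ones, Sym2.card_toFinset_of_not_isDiag]
  exact G.not_isDiag_of_mem_edgeSet (hF i _ (h.1 i hi))

end IsRainbowMatching_s2

lemma coveredVertices_mono {I J : Finset ι} {c : ι → Sym2 V} (h : J ⊆ I) :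
    coveredVertices J c ⊆ coveredVertices I c :=
  biUnion_subset_biUnion_of_subset_left _ h

def IsMaximumRainbowMatching (F : ι → Finset (Sym2 V)) (I : Finset ι) (c : ι → Sym2 V) :
    Prop :=
  IsRainbowMatching_s2 F I c ∧ ∀ J d, IsRainbowMatching_s2 F J d → #J ≤ #I

lemma exists_isMaximumRainbowMatching [Fintype ι] {F : ι → Finset (Sym2 V)}
    (h : ∃ I c, IsRainbowMatching_s2 F I c) : ∃ I c, IsMaximumRainbowMatching F I c := by
  obtain ⟨I, hI, hmax⟩ := exists_max_image {I : Finset ι | ∃ c, IsRainbowMatching_s2 F I c} card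
    (by obtain ⟨I, c, hc⟩ := h; exact ⟨I, by simpa using ⟨c, hc⟩⟩)
  obtain ⟨c, hc⟩ := (mem_filter.1 hI).2
  exact ⟨I, c, hc, fun J d hd => hmax J (by simpa using ⟨d, hd⟩)⟩

namespace IsMaximumRainbowMatching

variable {F : ι → Finset (Sym2 V)} {I J A : Finset ι} {c d : ι → Sym2 V}

lemma card_le_of_exchange (hM : IsMaximumRainbowMatching F I c) (hJ : J ⊆ I)
    (hAI : Disjoint A I) (hd : IsRainbowMatching_s2 F A d)
    (hsep : ∀ a ∈ A, ∀ v ∈ d a, v ∈ coveredVertices J c ∨ v ∉ coveredVertices I c) :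
    #A ≤ #J := by
  have hle := hM.2 _ _ (hM.1.exchange hd hJ hsep)
  have hdisj : Disjoint (I \ J) A := hAI.symm.mono_left sdiff_subset
  rw [card_union_of_disjoint hdisj, card_sdiff_of_subset hJ] at hle
  have := card_le_card hJ
  omega

lemma exists_mem_coveredVertices (hM : IsMaximumRainbowMatching F I c) {a : ι} (ha : a ∉ I)
    {g : Sym2 V} (hg : g ∈ F a) : ∃ v ∈ g, v ∈ coveredVertices I c := by
  by_contra! h
  have := hM.card_le_of_exchange (empty_subset I) (disjoint_singleton_left.2 ha)
    (isRainbowMatching_singleton hg) fun _ _ v hv => Or.inr (h v hv)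
  simp at this

end IsMaximumRainbowMatching

def extColors [Fintype ι] (F : ι → Finset (Sym2 V)) (I : Finset ι) (c : ι → Sym2 V)
    (v : V) : Finset ι :=
  {a ∈ Iᶜ | ∃ q ∉ coveredVertices I c, s(v, q) ∈ F a}

lemma mem_extColors [Fintype ι] {F : ι → Finset (Sym2 V)} {I : Finset ι} {c : ι → Sym2 V}
    {v : V} {a : ι} :
    a ∈ extColors F I c v ↔ a ∉ I ∧ ∃ q ∉ coveredVertices I c, s(v, q) ∈ F a := by
  simp [extColors]

def richEdges [Fintype ι] (F : ι → Finset (Sym2 V)) (I : Finset ι) (c : ι → Sym2 V) :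
    Finset ι :=
  {i ∈ I | ∃ v ∈ c i, 2 < #(extColors F I c v)}

lemma richEdges_subset [Fintype ι] (F : ι → Finset (Sym2 V)) (I : Finset ι)
    (c : ι → Sym2 V) : richEdges F I c ⊆ I :=
  filter_subset _ _

def innerEdges [Fintype ι] (F : ι → Finset (Sym2 V)) (I : Finset ι) (c : ι → Sym2 V)
    (a : ι) : Finset (Sym2 V) :=
  {g ∈ F a | ∀ v ∈ g, v ∈ coveredVertices I c}

lemma sum_card_extColors_eq_sum_card_filter [Fintype ι] (F : ι → Finset (Sym2 V))
    (I : Finset ι) (c : ι → Sym2 V) :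
    ∑ v ∈ coveredVertices I c, #(extColors F I c v) =
      ∑ a ∈ Iᶜ, #{v ∈ coveredVertices I c | a ∈ extColors F I c v} := by
  calc ∑ v ∈ coveredVertices I c, #(extColors F I c v)
      = ∑ v ∈ coveredVertices I c,
          #(Iᶜ.bipartiteAbove (fun v a => a ∈ extColors F I c v) v) := by
        refine sum_congr rfl fun v _ => congrArg card ?_
        ext a
        simp only [mem_bipartiteAbove, mem_compl, iff_and_self]
        exact fun ha => (mem_extColors.1 ha).1
    _ = _ := sum_card_bipartiteAbove_eq_sum_card_bipartiteBelow _

lemma exists_eq_mk_of_mem_coveredVertices_richEdges [Fintype ι] {F : ι → Finset (Sym2 V)}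
    {I : Finset ι} {c : ι → Sym2 V} {v : V} (hv : v ∈ coveredVertices (richEdges F I c) c)
    (hpoor : ¬2 < #(extColors F I c v)) :
    ∃ i ∈ I, ∃ w, c i = s(w, v) ∧ 2 < #(extColors F I c w) := by
  obtain ⟨i, hi, hvi⟩ := mem_coveredVertices.1 hv
  obtain ⟨hiI, w, hwi, hw⟩ := mem_filter.1 hi
  have hwv : w ≠ v := by rintro rfl; exact hpoor hw
  exact ⟨i, hiI, w, (Sym2.mem_and_mem_iff hwv).1 ⟨hwi, hvi⟩, hw⟩

namespace IsMaximumRainbowMatching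

variable {G : SimpleGraph V} {F : ι → Finset (Sym2 V)} {I : Finset ι} {c : ι → Sym2 V}
variable [Fintype ι]

lemma eq_of_mem_extColors (hM : IsMaximumRainbowMatching F I c)
    (hF : ∀ i, ∀ e ∈ F i, e ∈ G.edgeSet)
    (h3 : ∀ (u : V) (p : G.Walk u u), p.IsCycle → p.length ≠ 3) {i : ι} (hi : i ∈ I)
    {v w : V} (hc : c i = s(v, w)) {a b : ι} (ha : a ∈ extColors F I c v)
    (hb : b ∈ extColors F I c w) : a = b := by
  obtain ⟨haI, q, hq, hvq⟩ := mem_extColors.1 ha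
  obtain ⟨hbI, t, ht, hwt⟩ := mem_extColors.1 hb
  have hvw := hM.1.adj hF hi hc
  have hJ : {i} ⊆ I := singleton_subset_iff.2 hi
  have hvJ : v ∈ coveredVertices {i} c :=
    mem_coveredVertices.2 ⟨i, mem_singleton_self i, hc ▸ Sym2.mem_mk_left v w⟩
  have hwJ : w ∈ coveredVertices {i} c :=
    mem_coveredVertices.2 ⟨i, mem_singleton_self i, hc ▸ Sym2.mem_mk_right v w⟩
  have hvW := coveredVertices_mono hJ hvJ
  have hwW := coveredVertices_mono hJ hwJ
  by_contra hab
  -- `q = t` closes the triangle `v w q`; otherwise `vq` and `wt` can replace `c i`.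
  obtain rfl | hqt := eq_or_ne q t
  · obtain ⟨u, p, hp, hlen⟩ := exists_isCycle_length_three hvw (hF b _ hwt) (hF a _ hvq).symm
    exact h3 u p hp hlen
  · have hle := hM.card_le_of_exchange (J := {i}) (A := {a, b})
      (d := Function.update (fun _ => s(w, t)) a s(v, q)) hJ
      (by simp [haI, hbI])
      ((isRainbowMatching_singleton hwt).insert hvq (by
        simp only [mem_singleton, forall_eq, Sym2.mem_iff, forall_eq_or_imp]
        exact fun _ => ⟨by simp [hvw.ne, ne_of_mem_of_not_mem hvW ht],
          by simp [(ne_of_mem_of_not_mem hwW hq).symm, hqt]⟩))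
      (by
        simp only [mem_insert, mem_singleton, forall_eq_or_imp, forall_eq, Function.update_self,
          Function.update_of_ne (Ne.symm hab), Sym2.mem_iff]
        exact ⟨⟨.inl hvJ, .inr hq⟩, .inl hwJ, .inr ht⟩)
    simp [hab] at hle

lemma extColors_eq_empty_of_one_lt_card (hM : IsMaximumRainbowMatching F I c)
    (hF : ∀ i, ∀ e ∈ F i, e ∈ G.edgeSet)
    (h3 : ∀ (u : V) (p : G.Walk u u), p.IsCycle → p.length ≠ 3) {i : ι} (hi : i ∈ I)
    {v w : V} (hc : c i = s(v, w)) (hv : 1 < #(extColors F I c v)) : extColors F I c w = ∅ :=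
  eq_empty_of_forall_notMem fun b hb => by
    obtain ⟨a, ha, hab⟩ := exists_mem_ne hv b
    exact hab (hM.eq_of_mem_extColors hF h3 hi hc ha hb)

lemma eq_of_mem_extColors_of_edge_between (hM : IsMaximumRainbowMatching F I c)
    (hF : ∀ i, ∀ e ∈ F i, e ∈ G.edgeSet)
    (h5 : ∀ (u : V) (p : G.Walk u u), p.IsCycle → p.length ≠ 5) {i j : ι} (hi : i ∈ I)
    (hj : j ∈ I) (hij : i ≠ j) {v w v' w' : V} (hci : c i = s(w, v)) (hcj : c j = s(v', w'))
    {a b d : ι} (ha : a ∉ I) (hvv' : s(v, v') ∈ F a) (hb : b ∈ extColors F I c w)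
    (hd : d ∈ extColors F I c w') (hab : a ≠ b) (had : a ≠ d) : b = d := by
  obtain ⟨hbI, q, hq, hwq⟩ := mem_extColors.1 hb
  obtain ⟨hdI, t, ht, hw't⟩ := mem_extColors.1 hd
  have hwv := hM.1.adj hF hi hci
  have hv'w' := hM.1.adj hF hj hcj
  have hJ : {i, j} ⊆ I := insert_subset hi (singleton_subset_iff.2 hj)
  have hiJ : i ∈ ({i, j} : Finset ι) := mem_insert_self i {j}
  have hjJ : j ∈ ({i, j} : Finset ι) := mem_insert_of_mem (mem_singleton_self j)
  have hvJ := mem_coveredVertices.2 ⟨i, hiJ, hci ▸ Sym2.mem_mk_right w v⟩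
  have hwJ := mem_coveredVertices.2 ⟨i, hiJ, hci ▸ Sym2.mem_mk_left w v⟩
  have hv'J := mem_coveredVertices.2 ⟨j, hjJ, hcj ▸ Sym2.mem_mk_left v' w'⟩
  have hw'J := mem_coveredVertices.2 ⟨j, hjJ, hcj ▸ Sym2.mem_mk_right v' w'⟩
  have hvW := coveredVertices_mono hJ hvJ
  have hwW := coveredVertices_mono hJ hwJ
  have hv'W := coveredVertices_mono hJ hv'J
  have hw'W := coveredVertices_mono hJ hw'J
  have hv : v ≠ v' ∧ v ≠ w' := by simpa [hcj] using hM.1.2 i hi j hj hij v (by simp [hci])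
  have hw : w ≠ v' ∧ w ≠ w' := by simpa [hcj] using hM.1.2 i hi j hj hij w (by simp [hci])
  by_contra hbd
  -- `q = t` closes the 5-cycle `v w q w' v'`; otherwise `vv'`, `wq` and `w't` can replace
  -- `c i` and `c j`.
  obtain rfl | hqt := eq_or_ne q t
  · obtain ⟨u, p, hp, hlen⟩ := exists_isCycle_length_five hwv.symm (hF b _ hwq)
      (hF d _ hw't).symm hv'w'.symm (hF a _ hvv').symm (ne_of_mem_of_not_mem hvW hq) hv.2 hw.2
      hw.1 (ne_of_mem_of_not_mem hv'W hq).symm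
    exact h5 u p hp hlen
  · have hle := hM.card_le_of_exchange (J := {i, j}) (A := {a, b, d})
      (d := Function.update (Function.update (fun _ => s(w', t)) b s(w, q)) a s(v, v')) hJ
      (by simp [ha, hbI, hdI])
      (((isRainbowMatching_singleton hw't).insert hwq (by
        simp only [mem_singleton, forall_eq, Sym2.mem_iff, forall_eq_or_imp]
        exact fun _ => ⟨by simp [hw.2, ne_of_mem_of_not_mem hwW ht],
          by simp [(ne_of_mem_of_not_mem hw'W hq).symm, hqt]⟩)).insert hvv' (by
        simp [Function.update_apply, Ne.symm hbd, hwv.ne.symm, hw.1.symm, hv.2, hv'w'.ne,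
          ne_of_mem_of_not_mem hvW hq, ne_of_mem_of_not_mem hv'W hq,
          ne_of_mem_of_not_mem hvW ht, ne_of_mem_of_not_mem hv'W ht]))
      (by simp [Function.update_apply, Ne.symm hab, Ne.symm had, Ne.symm hbd, hvJ, hv'J, hwJ,
        hw'J, hq, ht])
    simp [hab, had, hbd, hij] at hle

lemma card_add_card_innerEdges_le (hM : IsMaximumRainbowMatching F I c)
    (hF : ∀ i, ∀ e ∈ F i, e ∈ G.edgeSet)
    (hmatch : ∀ i, ∀ e ∈ F i, ∀ f ∈ F i, e ≠ f → ∀ v ∈ e, v ∉ f) {a : ι} (ha : a ∉ I) :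
    #(F a) + #(innerEdges F I c a) ≤ #{v ∈ coveredVertices I c | ∃ g ∈ F a, v ∈ g} := by
  have hsplit : {v ∈ coveredVertices I c | ∃ g ∈ F a, v ∈ g} =
      (F a).biUnion fun g => {v ∈ coveredVertices I c | v ∈ g} := by
    ext v
    simp only [mem_filter, mem_biUnion]
    tauto
  rw [hsplit, card_biUnion fun g hg g' hg' hgg' => disjoint_filter.2 fun v _ hv =>
    hmatch a g hg g' hg' hgg' v hv, innerEdges, card_filter, card_eq_sum_ones,
    ← sum_add_distrib]
  refine sum_le_sum fun g hg => ?_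
  split_ifs with hin
  · calc 1 + 1 = #g.toFinset :=
          (Sym2.card_toFinset_of_not_isDiag g (G.not_isDiag_of_mem_edgeSet (hF a g hg))).symm
      _ ≤ _ := card_le_card fun v hv =>
          mem_filter.2 ⟨hin v (Sym2.mem_toFinset.1 hv), Sym2.mem_toFinset.1 hv⟩
  · obtain ⟨v, hvg, hvW⟩ := hM.exists_mem_coveredVertices ha hg
    exact card_pos.2 ⟨v, mem_filter.2 ⟨hvW, hvg⟩⟩

lemma card_le_card_innerEdges_add (hM : IsMaximumRainbowMatching F I c)
    (hmatch : ∀ i, ∀ e ∈ F i, ∀ f ∈ F i, e ≠ f → ∀ v ∈ e, v ∉ f) {a : ι} (ha : a ∉ I) :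
    #(F a) ≤ #(innerEdges F I c a) + #{v ∈ coveredVertices I c | a ∈ extColors F I c v} := by
  rw [← card_filter_add_card_filter_not (fun g => ∀ v ∈ g, v ∈ coveredVertices I c)]
  refine Nat.add_le_add_left (card_le_card_of_forall_subsingleton (fun g v => v ∈ g) ?_ ?_) _
  · intro g hg
    obtain ⟨hgF, hgout⟩ := mem_filter.1 hg
    obtain ⟨v, hvg, hvW⟩ := hM.exists_mem_coveredVertices ha hgF
    obtain ⟨q, rfl⟩ := Sym2.mem_iff_exists.1 hvg
    have hq : q ∉ coveredVertices I c := fun hq => hgout (by simp [hvW, hq])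
    exact ⟨v, mem_filter.2 ⟨hvW, mem_extColors.2 ⟨ha, q, hq, hgF⟩⟩, hvg⟩
  · intro v _ g hg g' hg'
    by_contra hne
    exact hmatch a g (mem_filter.1 hg.1).1 g' (mem_filter.1 hg'.1).1 hne v hg.2 hg'.2

lemma two_mul_sub_le_card_filter (hM : IsMaximumRainbowMatching F I c)
    (hF : ∀ i, ∀ e ∈ F i, e ∈ G.edgeSet)
    (hmatch : ∀ i, ∀ e ∈ F i, ∀ f ∈ F i, e ≠ f → ∀ v ∈ e, v ∉ f) {a : ι} (ha : a ∉ I) :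
    2 * (#(F a) - #I) ≤ #{v ∈ coveredVertices I c | a ∈ extColors F I c v} := by
  have h1 := hM.card_add_card_innerEdges_le hF hmatch ha
  have h2 := card_filter_le (coveredVertices I c) fun v => ∃ g ∈ F a, v ∈ g
  have h3 := hM.card_le_card_innerEdges_add hmatch ha
  rw [hM.1.card_coveredVertices hF] at h2
  omega

lemma sum_card_extColors_le_card_compl (hM : IsMaximumRainbowMatching F I c)
    (hF : ∀ i, ∀ e ∈ F i, e ∈ G.edgeSet)
    (h3 : ∀ (u : V) (p : G.Walk u u), p.IsCycle → p.length ≠ 3) {i : ι}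
    (hi : i ∈ richEdges F I c) : ∑ v ∈ (c i).toFinset, #(extColors F I c v) ≤ #Iᶜ := by
  obtain ⟨hiI, v, hv, hrich⟩ := mem_filter.1 hi
  obtain ⟨w, hc⟩ := Sym2.mem_iff_exists.1 hv
  have hw := hM.extColors_eq_empty_of_one_lt_card hF h3 hiI hc (by omega)
  rw [hc, Sym2.toFinset_mk_eq, sum_pair (hM.1.adj hF hiI hc).ne, hw, card_empty, add_zero]
  exact card_le_card (filter_subset _ _)

lemma sum_card_extColors_le_two (hM : IsMaximumRainbowMatching F I c)
    (hF : ∀ i, ∀ e ∈ F i, e ∈ G.edgeSet)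
    (h3 : ∀ (u : V) (p : G.Walk u u), p.IsCycle → p.length ≠ 3) {i : ι}
    (hi : i ∈ I \ richEdges F I c) : ∑ v ∈ (c i).toFinset, #(extColors F I c v) ≤ 2 := by
  obtain ⟨hiI, hpoor⟩ := mem_sdiff.1 hi
  obtain ⟨x, y, hc⟩ : ∃ x y, c i = s(x, y) :=
    Sym2.inductionOn (f := fun z => ∃ x y, z = s(x, y)) (c i) fun x y => ⟨x, y, rfl⟩
  have hx : #(extColors F I c x) ≤ 2 :=
    not_lt.1 fun h => hpoor (mem_filter.2 ⟨hiI, x, by simp [hc], h⟩)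
  have hy : #(extColors F I c y) ≤ 2 :=
    not_lt.1 fun h => hpoor (mem_filter.2 ⟨hiI, y, by simp [hc], h⟩)
  rw [hc, Sym2.toFinset_mk_eq, sum_pair (hM.1.adj hF hiI hc).ne]
  obtain hx0 | ⟨a, ha⟩ := (extColors F I c x).eq_empty_or_nonempty
  · rw [hx0, card_empty]; omega
  obtain hy0 | ⟨b, hb⟩ := (extColors F I c y).eq_empty_or_nonempty
  · rw [hy0, card_empty]; omega
  have hxb : extColors F I c x ⊆ {b} := fun a' ha' =>
    mem_singleton.2 (hM.eq_of_mem_extColors hF h3 hiI hc ha' hb)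
  have hya : extColors F I c y ⊆ {a} := fun b' hb' =>
    mem_singleton.2 (hM.eq_of_mem_extColors hF h3 hiI hc ha hb').symm
  have := card_le_card hxb
  have := card_le_card hya
  rw [card_singleton] at *
  omega

lemma sum_card_extColors_le (hM : IsMaximumRainbowMatching F I c)
    (hF : ∀ i, ∀ e ∈ F i, e ∈ G.edgeSet)
    (h3 : ∀ (u : V) (p : G.Walk u u), p.IsCycle → p.length ≠ 3) :
    ∑ v ∈ coveredVertices I c, #(extColors F I c v) ≤
      #Iᶜ * #(richEdges F I c) + 2 * #(I \ richEdges F I c) := by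
  rw [hM.1.sum_coveredVertices, ← sum_sdiff (richEdges_subset F I c)]
  calc _ ≤ ∑ i ∈ I \ richEdges F I c, 2 + ∑ i ∈ richEdges F I c, #Iᶜ :=
        add_le_add (sum_le_sum fun i hi => hM.sum_card_extColors_le_two hF h3 hi)
          (sum_le_sum fun i hi => hM.sum_card_extColors_le_card_compl hF h3 hi)
    _ = _ := by rw [sum_const, sum_const, smul_eq_mul, smul_eq_mul]; ring

lemma card_filter_rich_le (hM : IsMaximumRainbowMatching F I c)
    (hF : ∀ i, ∀ e ∈ F i, e ∈ G.edgeSet)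
    (h3 : ∀ (u : V) (p : G.Walk u u), p.IsCycle → p.length ≠ 3) :
    #{v ∈ coveredVertices I c | 2 < #(extColors F I c v)} ≤ #(richEdges F I c) := by
  refine card_le_card_of_forall_subsingleton (fun v i => v ∈ c i) (fun v hv => ?_) ?_
  · obtain ⟨hvW, hrich⟩ := mem_filter.1 hv
    obtain ⟨i, hi, hvi⟩ := mem_coveredVertices.1 hvW
    exact ⟨i, mem_filter.2 ⟨hi, v, hvi, hrich⟩, hvi⟩
  · intro i hi v hv w hw
    by_contra hvw
    have hc := (Sym2.mem_and_mem_iff hvw).1 ⟨hv.2, hw.2⟩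
    have hw0 := hM.extColors_eq_empty_of_one_lt_card hF h3 (mem_filter.1 hi).1 hc
      (by have := (mem_filter.1 hv.1).2; omega)
    have := (mem_filter.1 hw.1).2
    rw [hw0, card_empty] at this
    omega

lemma card_filter_poor_le_card_innerEdges (hM : IsMaximumRainbowMatching F I c)
    (hF : ∀ i, ∀ e ∈ F i, e ∈ G.edgeSet)
    (h3 : ∀ (u : V) (p : G.Walk u u), p.IsCycle → p.length ≠ 3)
    (h5 : ∀ (u : V) (p : G.Walk u u), p.IsCycle → p.length ≠ 5) {a : ι} (ha : a ∉ I) :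
    #{v ∈ coveredVertices (richEdges F I c) c |
        ¬2 < #(extColors F I c v) ∧ ∃ g ∈ F a, v ∈ g} ≤ #(innerEdges F I c a) := by
  refine card_le_card_of_forall_subsingleton (fun v g => v ∈ g) (fun v hv => ?_) ?_
  · obtain ⟨hvR, hpoor, g, hg, hvg⟩ := mem_filter.1 hv
    obtain ⟨i, hi, w, hc, hw⟩ := exists_eq_mk_of_mem_coveredVertices_richEdges hvR hpoor
    have hv0 := hM.extColors_eq_empty_of_one_lt_card hF h3 hi hc (by omega)
    have hvW : v ∈ coveredVertices I c := mem_coveredVertices.2 ⟨i, hi, by simp [hc]⟩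
    obtain ⟨q, rfl⟩ := Sym2.mem_iff_exists.1 hvg
    have hqW : q ∈ coveredVertices I c := by
      by_contra hq
      have := mem_extColors.2 ⟨ha, q, hq, hg⟩
      simp [hv0] at this
    exact ⟨_, mem_filter.2 ⟨hg, by simp [hvW, hqW]⟩, hvg⟩
  · intro g hg v hv v' hv'
    by_contra hne
    obtain ⟨hvR, hpoor, -⟩ := mem_filter.1 hv.1
    obtain ⟨hv'R, hpoor', -⟩ := mem_filter.1 hv'.1
    obtain ⟨i, hi, w, hci, hw⟩ := exists_eq_mk_of_mem_coveredVertices_richEdges hvR hpoor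
    obtain ⟨j, hj, w', hcj, hw'⟩ := exists_eq_mk_of_mem_coveredVertices_richEdges hv'R hpoor'
    have hg' : s(v, v') ∈ F a :=
      (Sym2.mem_and_mem_iff hne).1 ⟨hv.2, hv'.2⟩ ▸ (mem_filter.1 hg).1
    have hij : i ≠ j := by
      rintro rfl
      have : v' ∈ s(w, v) := hci ▸ hcj ▸ Sym2.mem_mk_right w' v'
      rcases Sym2.mem_iff.1 this with rfl | rfl
      · exact hpoor' hw
      · exact hne rfl
    obtain ⟨b, hb, hba⟩ := exists_mem_ne (by omega : 1 < #(extColors F I c w)) a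
    obtain ⟨d, hd⟩ : (extColors F I c w' \ {a, b}).Nonempty := by
      have := le_card_sdiff {a, b} (extColors F I c w')
      have := card_le_two (a := a) (b := b)
      rw [← card_pos]
      omega
    obtain ⟨hd, hdab⟩ := mem_sdiff.1 hd
    simp only [mem_insert, mem_singleton, not_or] at hdab
    exact hdab.2 (hM.eq_of_mem_extColors_of_edge_between hF h5 hi hj hij hci
      (hcj.trans Sym2.eq_swap) ha hg' hb hd (Ne.symm hba) (Ne.symm hdab.1)).symm

lemma card_le_card_add_card_sdiff_richEdges (hM : IsMaximumRainbowMatching F I c)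
    (hF : ∀ i, ∀ e ∈ F i, e ∈ G.edgeSet)
    (hmatch : ∀ i, ∀ e ∈ F i, ∀ f ∈ F i, e ≠ f → ∀ v ∈ e, v ∉ f)
    (h3 : ∀ (u : V) (p : G.Walk u u), p.IsCycle → p.length ≠ 3)
    (h5 : ∀ (u : V) (p : G.Walk u u), p.IsCycle → p.length ≠ 5) {a : ι} (ha : a ∉ I) :
    #(F a) ≤ #I + #(I \ richEdges F I c) := by
  have hsub : {v ∈ coveredVertices I c | ∃ g ∈ F a, v ∈ g} ⊆
      {v ∈ coveredVertices I c | 2 < #(extColors F I c v)} ∪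
      {v ∈ coveredVertices (richEdges F I c) c | ¬2 < #(extColors F I c v) ∧ ∃ g ∈ F a, v ∈ g} ∪
      coveredVertices (I \ richEdges F I c) c := by
    intro v hv
    obtain ⟨hvW, hcov⟩ := mem_filter.1 hv
    obtain ⟨i, hi, hvi⟩ := mem_coveredVertices.1 hvW
    simp only [mem_union, mem_filter]
    by_cases hrich : 2 < #(extColors F I c v)
    · exact .inl (.inl ⟨hvW, hrich⟩)
    by_cases hiR : i ∈ richEdges F I c
    · exact .inl (.inr ⟨mem_coveredVertices.2 ⟨i, hiR, hvi⟩, hrich, hcov⟩)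
    · exact .inr (mem_coveredVertices.2 ⟨i, mem_sdiff.2 ⟨hi, hiR⟩, hvi⟩)
  have hcov := (card_le_card hsub).trans
    ((card_union_le _ _).trans (Nat.add_le_add_right (card_union_le _ _) _))
  have hinner := hM.card_add_card_innerEdges_le hF hmatch ha
  have hrich := hM.card_filter_rich_le hF h3
  have hpoor := hM.card_filter_poor_le_card_innerEdges hF h3 h5 ha
  have hrest := (hM.1.mono (sdiff_subset : I \ richEdges F I c ⊆ I)).card_coveredVertices hF
  have hsplit := card_sdiff_add_card_eq_card (richEdges_subset F I c)
  omega

theorem three_mul_card_le (hM : IsMaximumRainbowMatching F I c)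
    (hF : ∀ i, ∀ e ∈ F i, e ∈ G.edgeSet)
    (hmatch : ∀ i, ∀ e ∈ F i, ∀ f ∈ F i, e ≠ f → ∀ v ∈ e, v ∉ f)
    (h3 : ∀ (u : V) (p : G.Walk u u), p.IsCycle → p.length ≠ 3)
    (h5 : ∀ (u : V) (p : G.Walk u u), p.IsCycle → p.length ≠ 5)
    (hsize : ∀ a, #(F a) = Fintype.card ι) : 3 * Fintype.card ι ≤ 4 * #I + 2 := by
  have hcard : Fintype.card ι = #I + #Iᶜ := by
    rw [card_compl]
    have := card_le_univ I
    omega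
  have hlow : #Iᶜ * (2 * #Iᶜ) ≤ ∑ v ∈ coveredVertices I c, #(extColors F I c v) := by
    rw [sum_card_extColors_eq_sum_card_filter, ← smul_eq_mul]
    refine card_nsmul_le_sum _ _ _ fun a ha => ?_
    have := hM.two_mul_sub_le_card_filter hF hmatch (mem_compl.1 ha)
    rwa [hsize, hcard, Nat.add_sub_cancel_left] at this
  have hup := hM.sum_card_extColors_le hF h3
  have hpoor : Fintype.card ι ≤ #I + #(I \ richEdges F I c) := by
    obtain h | ⟨a, ha⟩ := Iᶜ.eq_empty_or_nonempty
    · rw [hcard, h, card_empty]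
      omega
    · exact hsize a ▸ hM.card_le_card_add_card_sdiff_richEdges hF hmatch h3 h5 (mem_compl.1 ha)
  have hsplit := card_sdiff_add_card_eq_card (richEdges_subset F I c)
  nlinarith

end IsMaximumRainbowMatching

end

/-- If `G` contains no cycle of length 3 and no cycle of length 5, and
`F₁, …, Fₙ` are matchings of size `n` in `G`, then there is a rainbow matching of size
at least `(3/4)n - 9/4`. -/
theorem stmt_2 {V : Type*} (G : SimpleGraph V) (n : ℕ)
    (hfree : ∀ (v : V) (w : G.Walk v v), w.IsCycle → w.length ≠ 3 ∧ w.length ≠ 5)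
    (F : Fin n → Finset (Sym2 V))
    (hedges : ∀ i, ∀ e ∈ F i, e ∈ G.edgeSet)
    (hmatch : ∀ i, ∀ e ∈ F i, ∀ f ∈ F i, e ≠ f → ∀ v, v ∈ e → v ∉ f)
    (hsize : ∀ i, (F i).card = n) :
    ∃ (I : Finset (Fin n)) (c : Fin n → Sym2 V),
      (∀ i ∈ I, c i ∈ F i) ∧
      (∀ i ∈ I, ∀ j ∈ I, i ≠ j → ∀ v, v ∈ c i → v ∉ c j) ∧
      (3 / 4 : ℝ) * n - 9 / 4 ≤ (I.card : ℝ) := by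
  obtain rfl | hn := Nat.eq_zero_or_pos n
  · exact ⟨∅, Fin.elim0, by simp, by simp, by norm_num⟩
  obtain ⟨e, -⟩ : (F ⟨0, hn⟩).Nonempty := by rw [← card_pos, hsize]; exact hn
  obtain ⟨I, c, hM⟩ :=
    exists_isMaximumRainbowMatching (F := F) ⟨∅, fun _ => e, by simp [IsRainbowMatching_s2]⟩
  have hbound := hM.three_mul_card_le hedges hmatch (fun v w hw => (hfree v w hw).1)
    (fun v w hw => (hfree v w hw).2) (by simpa using hsize)
  refine ⟨I, c, hM.1.1, hM.1.2, ?_⟩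
  rw [Fintype.card_fin] at hbound
  have : (3 * n : ℝ) ≤ 4 * #I + 2 := by exact_mod_cast hbound
  linarith
end

section
/- Let the vertex set of a graph be partitioned into two sets S and Y, and let P_1, …, P_m be a sequence of directed S–S paths with m ≥ 2|Y| + 1. Then there exists a rainbow-monotone directed S–S path: a directed path P from a vertex of S to a vertex of S with all internal vertices in Y, whose edges, in the order they appear along P, are e_1, …, e_k with e_t an edge of P_{j_t} for indices j_1 < j_2 < … < j_k. -/
/-- The directed edges of a directed path given as a list of vertices: the ordered pairs
of consecutive vertices. -/
def dEdges {V : Type*} (l : List V) : List (V × V) :=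
  l.zip l.tail

/-- `l` is a directed `S`–`S` path in `G`: a directed path (list of distinct vertices,
consecutive ones adjacent) with at least one edge, whose initial and terminal vertices lie
in `S` and all of whose other vertices lie outside `S` (i.e. in `Y = V \ S`). -/
def IsSSPathList {V : Type*} (G : SimpleGraph V) (S : Set V) (l : List V) : Prop :=
  l.Nodup ∧ l.Chain' G.Adj ∧ 2 ≤ l.length ∧
  (∀ x ∈ l.head?, x ∈ S) ∧ (∀ x ∈ l.getLast?, x ∈ S) ∧
  ∀ v ∈ l, (∀ x ∈ l.head?, v ≠ x) → (∀ x ∈ l.getLast?, v ≠ x) → v ∉ S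

/-!
For `v ∉ S` let `A_i(v) = reachSet P S i v` be the set of `s ∈ S` from which some
rainbow-monotone path with respect to `P 0, …, P (i - 1)` leads to `v` through vertices
outside `S`, and let `Φ_i = potential P S i = ∑_{v ∉ S} min |A_i(v)| 2 ≤ 2 |Sᶜ|`. If there
is no rainbow-monotone `S`–`S` path, then `Φ_i < Φ_{i+1}` for every `i < m`, which is
impossible once `m > 2 |Sᶜ|`.

Suppose `Φ_{i+1} = Φ_i` and walk along `P i = s y₁ … y_k s'`. An edge `(v, w)` of `P i` gives
`A_i(v) ⊆ A_{i+1}(w)`, and since the truncated counts do not grow, `A_i(w) = A_{i+1}(w)`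
whenever `|A_i(w)| ≤ 1`. Hence, inductively, no `A_i(y_t)` lies inside a singleton `{x}` with
`x ≠ s`. For `x = s'` this yields a source `u ≠ s'` of `y_k`, and the edge `y_k s'` closes a
rainbow-monotone `S`–`S` path.
-/

open Finset

lemma Nat.le_apply_of_forall_lt_apply_succ {f : ℕ → ℕ} {m : ℕ}
    (h : ∀ i < m, f i < f (i + 1)) : m ≤ f m := by
  suffices ∀ n ≤ m, n ≤ f n from this m le_rfl
  intro n hn
  induction n with
  | zero => exact Nat.zero_le _
  | succ n ih => exact (ih (by omega)).trans_lt (h n hn)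

lemma Finset.eq_of_subset_of_min_card_eq {α : Type*} {A B : Finset α} {k : ℕ} (hAB : A ⊆ B)
    (h : min #B k = min #A k) (hA : #A < k) : A = B :=
  eq_of_subset_of_card_le hAB (by omega)

section

variable {V : Type*}

section dEdges

@[simp] lemma dEdges_nil : dEdges ([] : List V) = [] := rfl

@[simp] lemma dEdges_singleton (a : V) : dEdges [a] = [] := rfl

@[simp] lemma dEdges_cons_cons (a b : V) (l : List V) :
    dEdges (a :: b :: l) = (a, b) :: dEdges (b :: l) := rfl

lemma dEdges_append_singleton : ∀ {l : List V} {v : V}, l.getLast? = some v → ∀ w : V,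
    dEdges (l ++ [w]) = dEdges l ++ [(v, w)]
  | [], _, h, _ => by simp at h
  | [a], _, h, _ => by simp_all
  | a :: b :: l, v, h, w => by
    rw [List.getLast?_cons_cons] at h
    rw [List.cons_append, List.cons_append, dEdges_cons_cons, ← List.cons_append,
      dEdges_append_singleton h w, dEdges_cons_cons, List.cons_append]

lemma List.IsPrefix.dEdges : ∀ {l₁ l₂ : List V}, l₁ <+: l₂ → _root_.dEdges l₁ <+: _root_.dEdges l₂
  | [], _, _ => List.nil_prefix
  | [_], _, _ => List.nil_prefix
  | a :: b :: l₁, l₂, h => by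
    obtain ⟨r, rfl⟩ := h
    simpa using (List.prefix_append (b :: l₁) r).dEdges

lemma isChain_iff_forall_mem_dEdges {R : V → V → Prop} :
    ∀ {l : List V}, l.IsChain R ↔ ∀ e ∈ dEdges l, R e.1 e.2
  | [] => by simp
  | [_] => by simp
  | a :: b :: l => by simp [List.isChain_cons_cons, isChain_iff_forall_mem_dEdges (l := b :: l)]

lemma getElem_mem_dEdges {l : List V} {k : ℕ} (hk : k + 1 < l.length) :
    (l[k], l[k + 1]) ∈ dEdges l := by
  unfold dEdges
  have hk' : k < (l.zip l.tail).length := by simp; omega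
  refine List.mem_iff_getElem.2 ⟨k, hk', ?_⟩
  rw [List.getElem_zip, List.getElem_tail]

end dEdges

section Rainbow

variable {m : ℕ} (P : Fin m → List V)

/-- `l` is rainbow-monotone with respect to `P 0, …, P (i - 1)`. -/
def IsRainbowBefore (i : ℕ) (l : List V) : Prop :=
  ∃ js : List (Fin m), List.Forall₂ (fun e j => e ∈ dEdges (P j)) (dEdges l) js ∧
    js.Pairwise (· < ·) ∧ ∀ j ∈ js, (j : ℕ) < i

variable {P} {i : ℕ} {l : List V}

lemma isRainbowBefore_singleton (i : ℕ) (v : V) : IsRainbowBefore P i [v] :=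
  ⟨[], List.Forall₂.nil, List.Pairwise.nil, by simp⟩

lemma IsRainbowBefore.mono {i' : ℕ} (h : IsRainbowBefore P i l) (hi : i ≤ i') :
    IsRainbowBefore P i' l := by
  obtain ⟨js, hf, hjs, hbd⟩ := h
  exact ⟨js, hf, hjs, fun j hj => (hbd j hj).trans_le hi⟩

lemma IsRainbowBefore.of_prefix {l' : List V} (h : IsRainbowBefore P i l) (hl : l' <+: l) :
    IsRainbowBefore P i l' := by
  obtain ⟨js, hf, hjs, hbd⟩ := h
  let n := (dEdges l').length
  refine ⟨js.take n, ?_, hjs.sublist (List.take_sublist n js),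
    fun j hj => hbd j (List.mem_of_mem_take hj)⟩
  rw [List.prefix_iff_eq_take.1 hl.dEdges]
  exact List.forall₂_take n hf

lemma IsRainbowBefore.append_singleton (hi : i < m) (h : IsRainbowBefore P i l) {v w : V}
    (hv : l.getLast? = some v) (he : (v, w) ∈ dEdges (P ⟨i, hi⟩)) :
    IsRainbowBefore P (i + 1) (l ++ [w]) := by
  obtain ⟨js, hf, hjs, hbd⟩ := h
  refine ⟨js ++ [⟨i, hi⟩], ?_, ?_, ?_⟩
  · rw [dEdges_append_singleton hv]
    exact List.rel_append hf (List.Forall₂.cons he List.Forall₂.nil)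
  · refine List.pairwise_append.2 ⟨hjs, List.pairwise_singleton _ _, ?_⟩
    intro j hj k hk
    rw [List.mem_singleton.1 hk]
    exact hbd j hj
  · simp only [List.mem_append, List.mem_singleton]
    rintro j (hj | rfl)
    · exact (hbd j hj).trans (Nat.lt_succ_self i)
    · exact Nat.lt_succ_self i

lemma IsRainbowBefore.exists_strictMono (h : IsRainbowBefore P i l) :
    ∃ j : Fin (dEdges l).length → Fin m,
      StrictMono j ∧ ∀ t, (dEdges l).get t ∈ dEdges (P (j t)) := by
  obtain ⟨js, hf, hjs, -⟩ := h
  have hlen : (dEdges l).length = js.length := hf.length_eq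
  exact ⟨fun t => js.get (Fin.cast hlen t), fun a b hab => List.pairwise_iff_get.1 hjs _ _ hab,
    fun t => (List.forall₂_iff_get.1 hf).2 t t.isLt (hlen ▸ t.isLt)⟩

lemma IsRainbowBefore.isChain {G : SimpleGraph V} (hP : ∀ j, (P j).IsChain G.Adj)
    (h : IsRainbowBefore P i l) : l.IsChain G.Adj := by
  obtain ⟨j, -, hj⟩ := h.exists_strictMono
  refine isChain_iff_forall_mem_dEdges.2 fun e he => ?_
  obtain ⟨t, rfl⟩ := List.get_of_mem he
  exact isChain_iff_forall_mem_dEdges.1 (hP (j t)) _ (hj t)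

end Rainbow

section Reach

variable {m : ℕ} (P : Fin m → List V) (S : Finset V)

def ExistsRainbowSSPath (G : SimpleGraph V) : Prop :=
  ∃ l : List V, IsSSPathList G (S : Set V) l ∧
    ∃ j : Fin (dEdges l).length → Fin m,
      StrictMono j ∧ ∀ t, (dEdges l).get t ∈ dEdges (P (j t))

def RainbowReaches (i : ℕ) (s v : V) : Prop :=
  ∃ t : List V, (s :: t).getLast? = some v ∧ (s :: t).Nodup ∧ (∀ x ∈ t, x ∉ S) ∧
    IsRainbowBefore P i (s :: t)

variable {P S} {i : ℕ}

lemma RainbowReaches.refl (i : ℕ) (s : V) : RainbowReaches P S i s s :=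
  ⟨[], rfl, List.nodup_singleton s, by simp, isRainbowBefore_singleton i s⟩

lemma RainbowReaches.mono {i' : ℕ} {s v : V} (h : RainbowReaches P S i s v) (hi : i ≤ i') :
    RainbowReaches P S i' s v := by
  obtain ⟨t, hv, hnd, ht, hr⟩ := h
  exact ⟨t, hv, hnd, ht, hr.mono hi⟩

lemma RainbowReaches.of_mem {s w : V} {t : List V} (hnd : (s :: t).Nodup)
    (ht : ∀ x ∈ t, x ∉ S) (hr : IsRainbowBefore P i (s :: t)) (hw : w ∈ s :: t) :
    RainbowReaches P S i s w := by
  obtain ⟨l₁, l₂, hsplit⟩ := List.append_of_mem hw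
  rcases l₁ with _ | ⟨a, t₁⟩
  · obtain ⟨rfl, -⟩ : s = w ∧ t = l₂ := by simpa using hsplit
    exact .refl i s
  · obtain ⟨rfl, rfl⟩ : s = a ∧ t = t₁ ++ w :: l₂ := by simpa using hsplit
    have hpre : s :: (t₁ ++ [w]) <+: s :: (t₁ ++ w :: l₂) := by simp
    refine ⟨t₁ ++ [w], List.getLast?_concat (l := s :: t₁), hnd.sublist hpre.sublist,
      fun x hx => ht x ?_, hr.of_prefix hpre⟩
    simp only [List.mem_append, List.mem_cons] at hx ⊢
    tauto

/-- An edge `(v, w)` of `P i` extends every path reaching `v` to one reaching `w`, either by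
appending `w` or, if the path already visits `w`, by truncating it there. -/
lemma RainbowReaches.step (hi : i < m) {u v w : V} (h : RainbowReaches P S i u v)
    (he : (v, w) ∈ dEdges (P ⟨i, hi⟩)) (hw : w ∉ S) : RainbowReaches P S (i + 1) u w := by
  obtain ⟨t, hv, hnd, ht, hr⟩ := h
  by_cases hwt : w ∈ u :: t
  · exact (RainbowReaches.of_mem hnd ht hr hwt).mono i.le_succ
  refine ⟨t ++ [w], List.getLast?_concat (l := u :: t), by simpa using hnd.concat hwt, ?_,
    hr.append_singleton hi hv he⟩
  simp only [List.mem_append, List.mem_singleton]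
  rintro x (hx | rfl)
  exacts [ht x hx, hw]

lemma RainbowReaches.existsRainbowSSPath {G : SimpleGraph V} (hP : ∀ j, (P j).IsChain G.Adj)
    (hi : i < m) {u v w : V} (h : RainbowReaches P S i u v) (hu : u ∈ S)
    (he : (v, w) ∈ dEdges (P ⟨i, hi⟩)) (hw : w ∈ S) (huw : u ≠ w) :
    ExistsRainbowSSPath P S G := by
  obtain ⟨t, hv, hnd, ht, hr⟩ := h
  have hwt : w ∉ u :: t := by
    simpa [eq_comm, huw] using fun hwt => ht w hwt hw
  have hr' := hr.append_singleton hi hv he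
  have hlast : (u :: t ++ [w]).getLast? = some w := List.getLast?_concat (l := u :: t)
  refine ⟨u :: t ++ [w], ⟨?_, hr'.isChain hP, ?_, ?_, ?_, ?_⟩, hr'.exists_strictMono⟩
  · simpa using hnd.concat hwt
  · simp
  · simpa using hu
  · rw [hlast]
    simpa using hw
  · rw [hlast]
    intro x hx hxu hxw
    simp only [List.cons_append, List.head?_cons, Option.mem_def, Option.some.injEq,
      forall_eq'] at hxu hxw
    rw [List.mem_append, List.mem_cons, List.mem_singleton] at hx
    rcases hx with (rfl | hx) | rfl
    exacts [absurd rfl hxu, ht x hx, absurd rfl hxw]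

end Reach

section IsSSPathList

variable {G : SimpleGraph V} {S : Set V} {l : List V}

lemma IsSSPathList.getElem_zero_mem (h : IsSSPathList G S l) (hl : 0 < l.length) : l[0] ∈ S :=
  h.2.2.2.1 _ (by simp [List.head?_eq_getElem?, hl])

lemma IsSSPathList.getElem_mem_of_succ_eq {k : ℕ} (h : IsSSPathList G S l)
    (hk : k + 1 = l.length) : l[k] ∈ S :=
  h.2.2.2.2.1 _ (by simp [List.getLast?_eq_getElem?, ← hk])

lemma IsSSPathList.getElem_notMem {k : ℕ} (h : IsSSPathList G S l) (h0 : 0 < k)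
    (hk : k + 1 < l.length) : l[k] ∉ S := by
  refine h.2.2.2.2.2 _ (List.getElem_mem _) ?_ ?_
  · rw [List.head?_eq_getElem?, List.getElem?_eq_getElem (by omega)]
    rintro _ ⟨⟩ hx
    exact absurd ((h.1.getElem_inj_iff).1 hx) h0.ne'
  · rw [List.getLast?_eq_getElem?, List.getElem?_eq_getElem (by omega)]
    rintro _ ⟨⟩ hx
    exact absurd ((h.1.getElem_inj_iff).1 hx) (by omega)

end IsSSPathList

section Potential

variable {m : ℕ} (P : Fin m → List V) (S : Finset V)

open Classical in
noncomputable def reachSet (i : ℕ) (v : V) : Finset V :=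
  {s ∈ S | RainbowReaches P S i s v}

noncomputable def potential [Fintype V] [DecidableEq V] (i : ℕ) : ℕ :=
  ∑ v ∈ Sᶜ, min #(reachSet P S i v) 2

lemma potential_le [Fintype V] [DecidableEq V] (i : ℕ) : potential P S i ≤ 2 * #Sᶜ := by
  calc potential P S i ≤ ∑ _v ∈ Sᶜ, 2 := sum_le_sum fun v _ => min_le_right _ _
    _ = 2 * #Sᶜ := by rw [sum_const, smul_eq_mul, mul_comm]

variable {P S} {i : ℕ}

lemma mem_reachSet {s v : V} : s ∈ reachSet P S i v ↔ s ∈ S ∧ RainbowReaches P S i s v := by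
  simp [reachSet]

lemma reachSet_mono {i' : ℕ} (hi : i ≤ i') (v : V) : reachSet P S i v ⊆ reachSet P S i' v :=
  fun _ hs => mem_reachSet.2 ⟨(mem_reachSet.1 hs).1, (mem_reachSet.1 hs).2.mono hi⟩

lemma reachSet_subset_reachSet_succ (hi : i < m) {v w : V} (he : (v, w) ∈ dEdges (P ⟨i, hi⟩))
    (hw : w ∉ S) : reachSet P S i v ⊆ reachSet P S (i + 1) w :=
  fun _ hs => mem_reachSet.2 ⟨(mem_reachSet.1 hs).1, (mem_reachSet.1 hs).2.step hi he hw⟩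

lemma existsRainbowSSPath_of_stable {G : SimpleGraph V} (hP : ∀ j, IsSSPathList G S (P j))
    (hi : i < m)
    (hstable : ∀ v ∉ S, min #(reachSet P S (i + 1) v) 2 = min #(reachSet P S i v) 2) :
    ExistsRainbowSSPath P S G := by
  obtain ⟨p, hpP⟩ : ∃ p, P ⟨i, hi⟩ = p := ⟨_, rfl⟩
  have hp : IsSSPathList G S p := hpP ▸ hP ⟨i, hi⟩
  have hlen : 2 ≤ p.length := hp.2.2.1
  have hedge : ∀ k (hk : k + 1 < p.length), (p[k], p[k + 1]) ∈ dEdges (P ⟨i, hi⟩) :=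
    fun k hk => hpP ▸ getElem_mem_dEdges hk
  have hsources : ∀ k (hk : k + 1 < p.length), ∀ x ≠ p[0], ¬ reachSet P S i p[k] ⊆ {x} := by
    intro k
    induction k with
    | zero =>
      intro _ x hx hsub
      have hself : p[0] ∈ reachSet P S i p[0] :=
        mem_reachSet.2 ⟨hp.getElem_zero_mem (by omega), .refl i _⟩
      exact hx (mem_singleton.1 (hsub hself)).symm
    | succ k ih =>
      intro hk x hx hsub
      have hw : p[k + 1] ∉ S := hp.getElem_notMem k.succ_pos hk
      have hcard : #(reachSet P S i p[k + 1]) < 2 := by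
        have := card_le_card hsub
        rw [card_singleton] at this
        omega
      have heq := eq_of_subset_of_min_card_eq (reachSet_mono i.le_succ _) (hstable _ hw) hcard
      exact ih (by omega) x hx
        ((reachSet_subset_reachSet_succ hi (hedge k (by omega)) hw).trans (heq ▸ hsub))
  have hne : p[p.length - 2 + 1] ≠ p[0] := by
    rw [Ne, hp.1.getElem_inj_iff]
    omega
  obtain ⟨u, hu, hux⟩ := not_subset.1 (hsources (p.length - 2) (by omega) _ hne)
  rw [mem_reachSet] at hu
  exact hu.2.existsRainbowSSPath (fun j => (hP j).2.1) hi hu.1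
    (hedge _ (by omega)) (hp.getElem_mem_of_succ_eq (by omega))
    (by simpa using hux)

lemma potential_lt_potential_succ [Fintype V] [DecidableEq V] {G : SimpleGraph V}
    (hP : ∀ j, IsSSPathList G S (P j)) (hno : ¬ ExistsRainbowSSPath P S G) (hi : i < m) :
    potential P S i < potential P S (i + 1) := by
  have hle : ∀ v ∈ Sᶜ, min #(reachSet P S i v) 2 ≤ min #(reachSet P S (i + 1) v) 2 :=
    fun v _ => min_le_min_right 2 (card_le_card (reachSet_mono i.le_succ v))
  refine (sum_le_sum hle).lt_of_ne fun heq => hno ?_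
  have hstable := (sum_eq_sum_iff_of_le hle).1 heq
  exact existsRainbowSSPath_of_stable hP hi fun v hv => (hstable v (mem_compl.2 hv)).symm

end Potential

end

/-- If the vertex set of a graph is partitioned into `S` and `Y = Sᶜ` and
`P₁, …, Pₘ` are directed `S`–`S` paths with `m ≥ 2|Y| + 1`, then there exists a
rainbow-monotone directed `S`–`S` path: its edges, in order, are `e₁, …, e_k` with
`e_t` an edge of `P_{j_t}` for indices `j₁ < j₂ < … < j_k`. -/
theorem stmt_5 {V : Type*} [Fintype V] [DecidableEq V]
    (G : SimpleGraph V) (S : Finset V) (m : ℕ)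
    (P : Fin m → List V)
    (hpaths : ∀ i, IsSSPathList G (S : Set V) (P i))
    (hm : 2 * Sᶜ.card + 1 ≤ m) :
    ∃ l : List V, IsSSPathList G (S : Set V) l ∧
      ∃ j : Fin (dEdges l).length → Fin m,
        StrictMono j ∧
        ∀ t, (dEdges l).get t ∈ dEdges (P (j t)) := by
  by_contra hno
  have hgrow : m ≤ potential P S m :=
    Nat.le_apply_of_forall_lt_apply_succ fun i hi => potential_lt_potential_succ hpaths hno hi
  have hbound := potential_le P S m
  omega
end

section
/- Let F_1, …, F_n be matchings of size n in an r-uniform hypergraph, and let R be a rainbow matching of maximum size. For e ∈ R, then the number of indices i such that F_i is not represented in R and there exist r edges of F_i each intersecting e and intersecting no other edge of R, is at most r. -/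
/-!
If `F_i` and `F_j` are unrepresented and `a ∈ F_i`, `b ∈ F_j` are disjoint edges missing every
edge of `R` other than `e`, then trading `e` for `a` and `b` enlarges `R`; so for `i ≠ j` in
`T(e)` every witnessing edge of `F_i` meets every witnessing edge of `F_j`. Now `r` disjoint
sets meeting an `r`-set meet it in exactly one vertex each and cover it. For `r ≥ 2` pick
`x ≠ y` in `e`, an index `i₁ ∈ T(e)`, the witnessing edge `M` of `F_{i₁}` through `y`, and for
each `j ∈ T(e)` the witnessing edge `L_j` of `F_j` through `x`. The `L_j` pairwise meet only in
`x`, which is not in `M`, and they avoid `y`; so the `L_j` with `j ≠ i₁` meet `M \ {y}` in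
distinct vertices, and there are at most `r - 1` of them. For `r ≤ 1` the edges of `R` meet at
most `|R| < n` edges of an unrepresented `F_i`, so `R` could be extended.
-/

open Finset

section PairwiseDisjoint

variable {V : Type*} [DecidableEq V] {s : Finset (Finset V)} {t : Finset V}

lemma card_le_sum_card_inter (hmeet : ∀ a ∈ s, (a ∩ t).Nonempty) :
    #s ≤ ∑ a ∈ s, #(a ∩ t) := by
  simpa using card_nsmul_le_sum s (fun a => #(a ∩ t)) 1 fun a ha => card_pos.mpr (hmeet a ha)

lemma card_biUnion_inter_eq_sum (hs : (s : Set (Finset V)).PairwiseDisjoint id) :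
    #(s.biUnion (· ∩ t)) = ∑ a ∈ s, #(a ∩ t) :=
  card_biUnion fun _ ha _ hb hab =>
    (hs ha hb hab).mono inter_subset_left inter_subset_left

lemma sum_card_inter_le_card (hs : (s : Set (Finset V)).PairwiseDisjoint id) :
    ∑ a ∈ s, #(a ∩ t) ≤ #t :=
  card_biUnion_inter_eq_sum hs ▸ card_le_card (biUnion_subset.mpr fun _ _ => inter_subset_right)

lemma exists_disjoint_of_card_lt (hs : (s : Set (Finset V)).PairwiseDisjoint id)
    (hlt : #t < #s) : ∃ a ∈ s, Disjoint a t := by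
  by_contra! hmeet
  have := (card_le_sum_card_inter fun a ha => not_disjoint_iff_nonempty_inter.mp (hmeet a ha)).trans
    (sum_card_inter_le_card hs)
  omega

lemma card_inter_eq_one_of_card_le (hs : (s : Set (Finset V)).PairwiseDisjoint id)
    (hmeet : ∀ a ∈ s, (a ∩ t).Nonempty) (hcard : #t ≤ #s) : ∀ a ∈ s, #(a ∩ t) = 1 := by
  intro a ha
  by_contra hne
  have hlt : #s < ∑ b ∈ s, #(b ∩ t) := by
    rw [card_eq_sum_ones]
    exact sum_lt_sum (fun b hb => card_pos.mpr (hmeet b hb))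
      ⟨a, ha, (show 1 < #(a ∩ t) by have := card_pos.mpr (hmeet a ha); omega)⟩
  have := sum_card_inter_le_card (t := t) hs
  omega

lemma exists_mem_of_card_le (hs : (s : Set (Finset V)).PairwiseDisjoint id)
    (hmeet : ∀ a ∈ s, (a ∩ t).Nonempty) (hcard : #t ≤ #s) : ∀ v ∈ t, ∃ a ∈ s, v ∈ a := by
  have hcover : s.biUnion (· ∩ t) = t := by
    refine eq_of_subset_of_card_le (biUnion_subset.mpr fun _ _ => inter_subset_right) ?_
    rw [card_biUnion_inter_eq_sum hs]
    exact hcard.trans (card_le_sum_card_inter hmeet)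
  intro v hv
  obtain ⟨a, ha, hva⟩ := mem_biUnion.mp (hcover ▸ hv)
  exact ⟨a, ha, (mem_inter.mp hva).1⟩

end PairwiseDisjoint

theorem card_le_of_crossIntersecting {V ι : Type*} [DecidableEq V] [DecidableEq ι]
    {G : ι → Finset (Finset V)} {T : Finset ι} {e : Finset V} {r : ℕ} (hr : 2 ≤ r) (he : #e = r)
    (hdisj : ∀ j ∈ T, (G j : Set (Finset V)).PairwiseDisjoint id)
    (hcard : ∀ j ∈ T, r ≤ #(G j))
    (hunif : ∀ j ∈ T, ∀ a ∈ G j, #a = r)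
    (hmeet : ∀ j ∈ T, ∀ a ∈ G j, (a ∩ e).Nonempty)
    (hcross : ∀ j ∈ T, ∀ k ∈ T, j ≠ k → ∀ a ∈ G j, ∀ b ∈ G k, (a ∩ b).Nonempty) :
    #T ≤ r := by
  rcases T.eq_empty_or_nonempty with rfl | ⟨i₁, hi₁⟩
  · simp
  obtain ⟨x, hx, y, hy, hxy⟩ := one_lt_card.mp (show 1 < #e by omega)
  have hone : ∀ j ∈ T, ∀ a ∈ G j, #(a ∩ e) = 1 := fun j hj =>
    card_inter_eq_one_of_card_le (hdisj j hj) (hmeet j hj) (he ▸ hcard j hj)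
  have hcover : ∀ j ∈ T, ∀ v ∈ e, ∃ a ∈ G j, v ∈ a := fun j hj =>
    exists_mem_of_card_le (hdisj j hj) (hmeet j hj) (he ▸ hcard j hj)
  have hunique : ∀ j ∈ T, ∀ a ∈ G j, x ∈ a → y ∈ a → False := fun j hj a ha hxa hya =>
    hxy (card_le_one.mp (hone j hj a ha).le x (mem_inter.mpr ⟨hxa, hx⟩) y
      (mem_inter.mpr ⟨hya, hy⟩))
  choose! L hLG hxL using fun j hj => hcover j hj x hx
  obtain ⟨M, hMG, hyM⟩ := hcover i₁ hi₁ y hy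
  have hLL : ∀ j ∈ T, ∀ k ∈ T, j ≠ k → ∀ v ∈ L j, v ∈ L k → v = x := by
    intro j hj k hk hjk v hvj hvk
    have h1 : #(L k ∩ L j) = 1 :=
      card_inter_eq_one_of_card_le (hdisj k hk)
        (fun b hb => hcross k hk j hj hjk.symm b hb (L j) (hLG j hj))
        (hunif j hj _ (hLG j hj) ▸ hcard k hk) (L k) (hLG k hk)
    exact card_le_one.mp h1.le v (mem_inter.mpr ⟨hvk, hvj⟩) x
      (mem_inter.mpr ⟨hxL k hk, hxL j hj⟩)
  have hle : #(T.erase i₁) ≤ #(M.erase y) := calc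
    #(T.erase i₁) ≤ #((T.erase i₁).biUnion fun j => L j ∩ M) := by
      refine card_le_card_biUnion (fun j hj k hk hjk => disjoint_left.mpr ?_) fun j hj => ?_
      · intro v hvj hvk
        have hv := hLL j (mem_of_mem_erase hj) k (mem_of_mem_erase hk) hjk v
          (mem_inter.mp hvj).1 (mem_inter.mp hvk).1
        exact hunique i₁ hi₁ M hMG (hv ▸ (mem_inter.mp hvj).2) hyM
      · exact hcross j (mem_of_mem_erase hj) i₁ hi₁ (ne_of_mem_erase hj) _
          (hLG j (mem_of_mem_erase hj)) M hMG
    _ ≤ #(M.erase y) := by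
      refine card_le_card <| biUnion_subset.mpr fun j hj v hv =>
        mem_erase.mpr ⟨?_, (mem_inter.mp hv).2⟩
      rintro rfl
      exact hunique j (mem_of_mem_erase hj) _ (hLG j (mem_of_mem_erase hj))
        (hxL j (mem_of_mem_erase hj)) (mem_inter.mp hv).1
  rw [card_erase_of_mem hi₁, card_erase_of_mem hyM, hunif i₁ hi₁ M hMG] at hle
  omega

section Rainbow

variable {ι V : Type*} {F : ι → Finset (Finset V)} {I J : Finset ι}
  {c d : ι → Finset V}

/-- The rainbow matching `{d i | i ∈ J}`: the edge `d i` is chosen from `F i`. -/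
def IsRainbow (F : ι → Finset (Finset V)) (J : Finset ι) (d : ι → Finset V) : Prop :=
  (∀ i ∈ J, d i ∈ F i) ∧ (J : Set ι).PairwiseDisjoint d

lemma IsRainbow.subset (h : IsRainbow F J d) (hIJ : I ⊆ J) : IsRainbow F I d :=
  ⟨fun i hi => h.1 i (hIJ hi), h.2.subset (coe_subset.mpr hIJ)⟩

variable [DecidableEq ι]

lemma IsRainbow.extend {i : ι} {f : Finset V} (h : IsRainbow F J d) (hi : i ∉ J) (hf : f ∈ F i)
    (hfd : ∀ k ∈ J, Disjoint f (d k)) : IsRainbow F (insert i J) (Function.update d i f) := by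
  have hupd : ∀ k ∈ J, Function.update d i f k = d k := fun k hk =>
    Function.update_of_ne (ne_of_mem_of_not_mem hk hi) _ _
  refine ⟨fun k hk => ?_, ?_⟩
  · rcases mem_insert.mp hk with rfl | hk
    · simpa using hf
    · exact hupd k hk ▸ h.1 k hk
  · rw [coe_insert, Set.pairwiseDisjoint_insert_of_notMem (mem_coe.not.mpr hi)]
    refine ⟨fun k hk l hl hkl => ?_, fun k hk => ?_⟩
    · simpa only [Function.onFun, hupd k hk, hupd l hl] using h.2 hk hl hkl
    · simpa [hupd k hk] using hfd k hk

variable (hR : IsRainbow F I c) (hmax : ∀ J d, IsRainbow F J d → #J ≤ #I)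
include hR hmax

lemma IsRainbow.exists_not_disjoint_of_maximal {i : ι} {f : Finset V} (hi : i ∉ I)
    (hf : f ∈ F i) : ∃ k ∈ I, ¬Disjoint f (c k) := by
  by_contra! h
  have := hmax _ _ (hR.extend hi hf h)
  rw [card_insert_of_notMem hi] at this
  omega

/-- Otherwise `c i₀` could be traded for the two edges `a` and `b`. -/
lemma IsRainbow.not_disjoint_of_maximal {i₀ i j : ι} {a b : Finset V} (hi₀ : i₀ ∈ I) (hij : i ≠ j)
    (hi : i ∉ I) (hj : j ∉ I) (ha : a ∈ F i) (hb : b ∈ F j)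
    (haI : ∀ k ∈ I.erase i₀, Disjoint a (c k)) (hbI : ∀ k ∈ I.erase i₀, Disjoint b (c k)) :
    ¬Disjoint a b := by
  intro hab
  have hj' : j ∉ I.erase i₀ := fun h => hj (mem_of_mem_erase h)
  have hi' : i ∉ insert j (I.erase i₀) := by
    simpa [hij] using fun h => hi (mem_of_mem_erase h)
  have hR' := ((hR.subset (erase_subset i₀ I)).extend hj' hb hbI).extend hi' ha fun k hk => by
    rcases mem_insert.mp hk with rfl | hk
    · simpa using hab
    · simpa [Function.update_of_ne (ne_of_mem_of_not_mem hk hj')] using haI k hk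
  have := hmax _ _ hR'
  rw [card_insert_of_notMem hi', card_insert_of_notMem hj', card_erase_of_mem hi₀] at this
  have := card_pos.mpr ⟨i₀, hi₀⟩
  omega

variable [DecidableEq V]

lemma IsRainbow.mem_of_maximal_of_card_le_one {i : ι} (hc : ∀ k ∈ I, #(c k) ≤ 1)
    (hF : (F i : Set (Finset V)).PairwiseDisjoint id) (hlt : #I < #(F i)) : i ∈ I := by
  by_contra hi
  have hU : #(I.biUnion c) < #(F i) := (card_biUnion_le_card_mul I c 1 hc).trans_lt (by simpa)
  obtain ⟨f, hf, hfU⟩ := exists_disjoint_of_card_lt hF hU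
  obtain ⟨k, hk, hfk⟩ := hR.exists_not_disjoint_of_maximal hmax hi hf
  exact hfk (hfU.mono_right (subset_biUnion_of_mem c hk))

lemma IsRainbow.card_le_of_maximal {r : ℕ} {i₀ : ι} {T : Finset ι} (hi₀ : i₀ ∈ I) (hr : 2 ≤ r)
    (hunif : ∀ i, ∀ a ∈ F i, #a = r) (hF : ∀ i, (F i : Set (Finset V)).PairwiseDisjoint id)
    (hT : ∀ j ∈ T, j ∉ I ∧ ∃ g ⊆ F j, #g = r ∧ ∀ a ∈ g, (a ∩ c i₀).Nonempty ∧
      ∀ f ∈ I.image c, f ≠ c i₀ → Disjoint a f) :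
    #T ≤ r := by
  have hne : ∀ k ∈ I.erase i₀, c k ≠ c i₀ := fun k hk hk₀ => by
    have hempty : Disjoint (c k) (c i₀) :=
      hR.2 (mem_coe.mpr (mem_of_mem_erase hk)) (mem_coe.mpr hi₀) (ne_of_mem_erase hk)
    rw [hk₀, disjoint_self, bot_eq_empty] at hempty
    have := hunif i₀ _ (hR.1 i₀ hi₀)
    rw [hempty, card_empty] at this
    omega
  let G j := (F j).filter fun a => (a ∩ c i₀).Nonempty ∧
    ∀ f ∈ I.image c, f ≠ c i₀ → Disjoint a f
  have hGI : ∀ j, ∀ a ∈ G j, ∀ k ∈ I.erase i₀, Disjoint a (c k) := fun j a ha k hk =>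
    (mem_filter.mp ha).2.2 _ (mem_image_of_mem c (mem_of_mem_erase hk)) (hne k hk)
  refine card_le_of_crossIntersecting (G := G) hr (hunif i₀ _ (hR.1 i₀ hi₀))
    (fun j _ => (hF j).subset (coe_subset.mpr (filter_subset _ _))) (fun j hj => ?_)
    (fun j _ a ha => hunif j a (mem_filter.mp ha).1) (fun j _ a ha => (mem_filter.mp ha).2.1)
    fun j hj k hk hjk a ha b hb => not_disjoint_iff_nonempty_inter.mp <|
      hR.not_disjoint_of_maximal hmax hi₀ hjk (hT j hj).1 (hT k hk).1
        (mem_filter.mp ha).1 (mem_filter.mp hb).1 (hGI j a ha) (hGI k b hb)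
  obtain ⟨-, g, hgF, hgr, hg⟩ := hT j hj
  exact hgr ▸ card_le_card fun a ha => mem_filter.mpr ⟨hgF ha, hg a ha⟩

end Rainbow

/-- Let `F₁, …, Fₙ` be matchings of size `n` in an `r`-uniform
hypergraph and let `R` (given by indices `I` and choice `c`) be a rainbow matching of
maximum size. For `e ∈ R`, the number of indices `i` such that `Fᵢ` is not represented in
`R` and there exist `r` edges of `Fᵢ`, each intersecting `e` and no other edge of `R`, is
at most `r`. -/
theorem stmt_7 {V : Type*} [DecidableEq V] (r n : ℕ)
    (E : Set (Finset V)) (hunifE : ∀ e ∈ E, e.card = r)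
    (F : Fin n → Finset (Finset V))
    (hedges : ∀ i, ∀ e ∈ F i, e ∈ E)
    (hmatch : ∀ i, ∀ e ∈ F i, ∀ f ∈ F i, e ≠ f → Disjoint e f)
    (hsize : ∀ i, (F i).card = n)
    (I : Finset (Fin n)) (c : Fin n → Finset V)
    (hc : ∀ i ∈ I, c i ∈ F i)
    (hdisj : ∀ i ∈ I, ∀ j ∈ I, i ≠ j → Disjoint (c i) (c j))
    (hmax : ∀ (J : Finset (Fin n)) (d : Fin n → Finset V),
      (∀ i ∈ J, d i ∈ F i) →
      (∀ i ∈ J, ∀ j ∈ J, i ≠ j → Disjoint (d i) (d j)) →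
      J.card ≤ I.card)
    (e : Finset V) (he : e ∈ I.image c) :
    {i : Fin n | i ∉ I ∧ ∃ g : Finset (Finset V), g ⊆ F i ∧ g.card = r ∧
      ∀ a ∈ g, (a ∩ e).Nonempty ∧ ∀ f ∈ I.image c, f ≠ e → Disjoint a f}.ncard ≤ r := by
  classical
  obtain ⟨i₀, hi₀, rfl⟩ := mem_image.mp he
  have hR : IsRainbow F I c := ⟨hc, fun i hi j hj hij => hdisj i hi j hj hij⟩
  have hmax' : ∀ J d, IsRainbow F J d → #J ≤ #I := fun J d h =>
    hmax J d h.1 fun i hi j hj hij => h.2 hi hj hij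
  have hF : ∀ i, (F i : Set (Finset V)).PairwiseDisjoint id := fun i a ha b hb hab =>
    hmatch i a ha b hb hab
  have hunif : ∀ i, ∀ a ∈ F i, #a = r := fun i a ha => hunifE a (hedges i a ha)
  rw [Set.ncard_eq_toFinset_card _ (Set.toFinite _)]
  generalize hT : Set.Finite.toFinset _ = T
  have hTmem : ∀ j ∈ T, j ∉ I ∧ ∃ g ⊆ F j, #g = r ∧ ∀ a ∈ g, (a ∩ c i₀).Nonempty ∧
      ∀ f ∈ I.image c, f ≠ c i₀ → Disjoint a f := fun j hj => by simpa [← hT] using hj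
  rcases lt_or_ge r 2 with hr | hr
  · suffices T = ∅ by simp [this]
    refine eq_empty_of_forall_notMem fun i hi => (hTmem i hi).1 ?_
    refine hR.mem_of_maximal_of_card_le_one hmax' (fun k hk => ?_) (hF i) ?_
    · rw [hunif k _ (hc k hk)]; omega
    · simpa [hsize] using card_lt_univ_of_notMem (hTmem i hi).1
  · exact hR.card_le_of_maximal hmax' hi₀ hr hunif hF hTmem
end

section
/- Let r ≥ 2 be an integer and let n, q be nonnegative real numbers satisfying (2r−1)q² − (n + 2rn + r)q + 2n² ≤ 0 together with q ≥ (n + 2rn + r − √((n+2rn+r)² − 8(2r−1)n²))/(2(2r−1)). Then q > (n − 1/2 − 3/(4r−6))/(r − 1/2). -/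
/-!
With `t = r(2r+1)/(2r-3)`, the discriminant of `(2r-1)x² - (n+2rn+r)x + 2n²` equals
`((2r-3)n + t)² - (t² - r²)`, and `t > r`, so its square root is strictly below `(2r-3)n + t`.
Substituting this into the formula for the smaller root gives exactly the claimed bound.
-/

lemma Real.sqrt_sq_sub_lt {x d : ℝ} (hx : 0 < x) (hd : 0 < d) : √(x ^ 2 - d) < x :=
  (Real.sqrt_lt' hx).mpr (by linarith)

section SmallerRoot

variable {r : ℝ} (n : ℝ)

lemma discrim_eq_sq_sub (hr : 3 / 2 < r) :
    (n + 2 * r * n + r) ^ 2 - 8 * (2 * r - 1) * n ^ 2 =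
      ((2 * r - 3) * n + r * (2 * r + 1) / (2 * r - 3)) ^ 2 -
        ((r * (2 * r + 1) / (2 * r - 3)) ^ 2 - r ^ 2) := by
  have : 2 * r - 3 ≠ 0 := by linarith
  field_simp
  ring

lemma sqrt_discrim_lt (hr : 3 / 2 < r) (hn : 0 ≤ n) :
    √((n + 2 * r * n + r) ^ 2 - 8 * (2 * r - 1) * n ^ 2) <
      (2 * r - 3) * n + r * (2 * r + 1) / (2 * r - 3) := by
  have hc : 0 < 2 * r - 3 := by linarith
  have ht : r < r * (2 * r + 1) / (2 * r - 3) := by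
    rw [lt_div_iff₀ hc]
    nlinarith
  rw [discrim_eq_sq_sub n hr]
  exact Real.sqrt_sq_sub_lt (by positivity) (by nlinarith)

lemma lt_smaller_root (hr : 3 / 2 < r) (hn : 0 ≤ n) :
    (n - 1 / 2 - 3 / (4 * r - 6)) / (r - 1 / 2) <
      (n + 2 * r * n + r - √((n + 2 * r * n + r) ^ 2 - 8 * (2 * r - 1) * n ^ 2)) /
        (2 * (2 * r - 1)) := by
  have hc : 2 * r - 3 ≠ 0 := by linarith
  have hlhs : (n - 1 / 2 - 3 / (4 * r - 6)) / (r - 1 / 2) =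
      (n + 2 * r * n + r - ((2 * r - 3) * n + r * (2 * r + 1) / (2 * r - 3))) /
        (2 * (2 * r - 1)) := by
    have : 4 * r - 6 ≠ 0 := by linarith
    have : 2 * r - 1 ≠ 0 := by linarith
    field_simp
    ring
  rw [hlhs]
  gcongr
  · linarith
  · exact sqrt_discrim_lt n hr hn

end SmallerRoot

theorem stmt_8_general (r : ℕ) (hr : 2 ≤ r) (n q : ℝ) (hn : 0 ≤ n)
    (h2 : (n + 2 * (r : ℝ) * n + r -
        Real.sqrt ((n + 2 * r * n + r) ^ 2 - 8 * (2 * r - 1) * n ^ 2)) /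
        (2 * (2 * r - 1)) ≤ q) :
    (n - 1 / 2 - 3 / (4 * (r : ℝ) - 6)) / ((r : ℝ) - 1 / 2) < q := by
  have hr' : (3 / 2 : ℝ) < r := by
    have : (2 : ℝ) ≤ r := by exact_mod_cast hr
    linarith
  exact (lt_smaller_root n hr' hn).trans_le h2

/-- Purely arithmetic claim: if `r ≥ 2` is an integer, `n, q ≥ 0` are
reals with `(2r-1)q² - (n + 2rn + r)q + 2n² ≤ 0` and `q` at least the smaller root of
this quadratic, then `q > (n - 1/2 - 3/(4r-6)) / (r - 1/2)`. -/
theorem stmt_8 (r : ℕ) (hr : 2 ≤ r) (n q : ℝ) (hn : 0 ≤ n) (hq : 0 ≤ q)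
    (h1 : (2 * (r : ℝ) - 1) * q ^ 2 - (n + 2 * r * n + r) * q + 2 * n ^ 2 ≤ 0)
    (h2 : (n + 2 * (r : ℝ) * n + r -
        Real.sqrt ((n + 2 * r * n + r) ^ 2 - 8 * (2 * r - 1) * n ^ 2)) /
        (2 * (2 * r - 1)) ≤ q) :
    (n - 1 / 2 - 3 / (4 * (r : ℝ) - 6)) / ((r : ℝ) - 1 / 2) < q :=
  stmt_8_general r hr n q hn h2
end
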